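/- arXiv:2507.04689 — 10 statements merged into one kernel-verified Lean document; each statement's English description precedes it below -/
import Mathlib

section
/- Let a_1,...,a_n be pairwise distinct elements of F_q with s_{n-1}(a_1,...,a_n) = 0, where s_{n-1} is the elementary symmetric polynomial of degree n-1. Then none of the a_i is zero, and for every i, s_{n-2}(a^{(i)}) ≠ 0, where a^{(i)} is the tuple obtained by deleting a_i. -/
/-!
Splitting off the index `i`, `s_{n-1}(a) = a_i · s_{n-2}(a^{(i)}) + ∏_{j ≠ i} a_j`.
Since the `a_j` are distinct, at most one of them vanishes. If `a_i = 0`, the product over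
`j ≠ i` is nonzero, so `s_{n-1}(a) ≠ 0`. Hence all `a_j ≠ 0`, and then `s_{n-2}(a^{(i)}) = 0`
would force `s_{n-1}(a) = ∏_{j ≠ i} a_j ≠ 0`.
-/

open Finset

namespace Multiset

variable {R : Type*} [CommSemiring R]

theorem esymm_cons_succ (a : R) (s : Multiset R) (k : ℕ) :
    (a ::ₘ s).esymm (k + 1) = a * s.esymm k + s.esymm (k + 1) := by
  simp [esymm, sum_map_mul_left, add_comm]

theorem esymm_card (s : Multiset R) : s.esymm (card s) = s.prod := by
  simp [esymm, powersetCard_self]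

end Multiset

theorem Finset.sum_powersetCard_prod_eq_mul_add_prod_erase {ι R : Type*} [CommSemiring R]
    [DecidableEq ι] (f : ι → R) {s : Finset ι} {i : ι} (hi : i ∈ s) {k : ℕ}
    (hs : #s = k + 2) :
    ∑ A ∈ s.powersetCard (k + 1), ∏ j ∈ A, f j
      = f i * ∑ t ∈ (s.erase i).powersetCard k, ∏ j ∈ t, f j + ∏ j ∈ s.erase i, f j := by
  have hcard : #(s.erase i) = k + 1 := by rw [card_erase_of_mem hi, hs]; rfl
  have hval : s.val.map f = f i ::ₘ (s.erase i).val.map f := by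
    rw [← Multiset.map_cons, erase_val, Multiset.cons_erase hi]
  simp_rw [← esymm_map_val, hval, Multiset.esymm_cons_succ, prod_eq_multiset_prod]
  rw [← hcard, card_def, ← Multiset.card_map f, Multiset.esymm_card]

theorem esymm_nonzero_of_tsub1_eq_zero_general {F : Type*} [Field F] {n : ℕ}
    (a : Fin n → F) (ha : Function.Injective a)
    (h : ∑ A ∈ (univ : Finset (Fin n)).powersetCard (n - 1), ∏ j ∈ A, a j = 0) :
    (∀ i, a i ≠ 0) ∧
      ∀ i, (∑ t ∈ (univ.erase i).powersetCard (n - 2), ∏ j ∈ t, a j) ≠ 0 := by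
  obtain ⟨k, rfl⟩ : ∃ k, n = k + 2 := by
    refine Nat.exists_eq_add_of_le' (Nat.le_of_not_lt fun hn => ?_)
    rw [Nat.sub_eq_zero_of_le (Nat.le_of_lt_succ hn), powersetCard_zero, sum_singleton,
      prod_empty] at h
    exact one_ne_zero h
  simp only [Nat.add_sub_cancel, show k + 2 - 1 = k + 1 from rfl] at h ⊢
  have split (i : Fin (k + 2)) :=
    sum_powersetCard_prod_eq_mul_add_prod_erase a (mem_univ i) (k := k) (by simp)
  have prod_erase_ne_zero (i : Fin (k + 2)) (hne : ∀ j ≠ i, a j ≠ 0) :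
      ∏ j ∈ univ.erase i, a j ≠ 0 :=
    prod_ne_zero_iff.mpr fun j hj => hne j (ne_of_mem_erase hj)
  have ha0 (i : Fin (k + 2)) : a i ≠ 0 := fun hi => by
    refine prod_erase_ne_zero i (fun j hj haj => hj (ha (haj.trans hi.symm))) ?_
    simpa [hi, h] using (split i).symm
  refine ⟨ha0, fun i hS => prod_erase_ne_zero i (fun j _ => ha0 j) ?_⟩
  simpa [hS, h] using (split i).symm

theorem esymm_nonzero_of_tsub1_eq_zero {F : Type*} [Field F] [Fintype F] {n : ℕ}
    (a : Fin n → F) (ha : Function.Injective a)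
    (h : ∑ A ∈ (univ : Finset (Fin n)).powersetCard (n - 1), ∏ j ∈ A, a j = 0) :
    (∀ i, a i ≠ 0) ∧
      ∀ i, (∑ t ∈ (univ.erase i).powersetCard (n - 2), ∏ j ∈ t, a j) ≠ 0 :=
  esymm_nonzero_of_tsub1_eq_zero_general a ha h
end

section
/- Let n = 2k ≥ 8, 2 ≤ r ≤ k-2, and let a_1,...,a_n ∈ F_q be pairwise distinct and v_1,...,v_n ∈ F_q nonzero. Then the code GRS_{k,r}(a,v), spanned by the rows (v_1 a_1^j, ..., v_n a_n^j) for j ∈ {0,...,k} \ {k-r}, is never self-dual (i.e., it never equals its dual code under the standard bilinear form on F_q^n). -/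
open Finset Polynomial

/-- The subcode `GRS_{k,r}(a,v)` of the `[n,k+1]` GRS code: evaluations of polynomials of
degree at most `k` whose coefficient of `x^(k-r)` vanishes. -/
def GRSsub {F : Type*} [Field F] (n k r : ℕ) (a v : Fin n → F) : Set (Fin n → F) :=
  {c | ∃ f : F[X], f.natDegree ≤ k ∧ f.coeff (k - r) = 0 ∧ ∀ i, c i = v i * f.eval (a i)}

/-- The dual code with respect to the standard dot product. -/
def dualCode {F : Type*} [Field F] {n : ℕ} (C : Set (Fin n → F)) : Set (Fin n → F) :=
  {w | ∀ c ∈ C, ∑ i, w i * c i = 0}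

/-!
If `C = GRS_{k,r}(a,v)` were self-orthogonal, the words `(v_t a_t^i)_t` with `i ≤ k`,
`i ≠ k - r` would be pairwise orthogonal, i.e. `∑ t, v_t² a_t^(i+j) = 0`. Since
`2 ≤ k - r ≤ k - 2`, every exponent `s < 2k = n` is such a sum `i + j`, so the vector
`(v_t²)_t` is killed by the invertible Vandermonde matrix of the distinct `a_t`, and
hence `v = 0`.
-/

theorem exists_add_eq_of_lt_two_mul_avoiding {k m s : ℕ} (hm : 2 ≤ m) (hmk : m + 2 ≤ k)
    (hs : s < 2 * k) : ∃ i j, i + j = s ∧ i ≤ k ∧ i ≠ m ∧ j ≤ k ∧ j ≠ m := by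
  rcases le_or_gt s k with hsk | hsk
  · rcases eq_or_ne s m with rfl | hsm
    · exact ⟨1, s - 1, by omega, by omega, by omega, by omega, by omega⟩
    · exact ⟨0, s, by omega, by omega, by omega, hsk, hsm⟩
  · rcases eq_or_ne (s - k) m with hsm | hsm
    · exact ⟨k - 1, m + 1, by omega, by omega, by omega, by omega, by omega⟩
    · exact ⟨k, s - k, by omega, le_rfl, by omega, by omega, hsm⟩

section GRSsub

variable {F : Type*} [Field F] {n k r : ℕ} {a v : Fin n → F}

theorem pow_mem_GRSsub {i : ℕ} (hik : i ≤ k) (hir : i ≠ k - r) :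
    (fun t => v t * a t ^ i) ∈ GRSsub n k r a v :=
  ⟨X ^ i, by simpa using hik, by rw [coeff_X_pow, if_neg hir.symm], fun _ => by simp⟩

theorem sum_sq_mul_pow_eq_zero_of_subset_dualCode
    (hC : GRSsub n k r a v ⊆ dualCode (GRSsub n k r a v)) (hr : 2 ≤ r) (hrk : r + 2 ≤ k)
    {s : ℕ} (hs : s < 2 * k) : ∑ t, v t ^ 2 * a t ^ s = 0 := by
  obtain ⟨i, j, rfl, hik, hir, hjk, hjr⟩ :=
    exists_add_eq_of_lt_two_mul_avoiding (m := k - r) (by omega) (by omega) hs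
  calc ∑ t, v t ^ 2 * a t ^ (i + j) = ∑ t, (v t * a t ^ i) * (v t * a t ^ j) :=
        sum_congr rfl fun t _ => by ring
    _ = 0 := hC (pow_mem_GRSsub hik hir) _ (pow_mem_GRSsub hjk hjr)

theorem GRSsub_not_subset_dualCode (hnk : n = 2 * k) (hr : 2 ≤ r) (hrk : r + 2 ≤ k)
    (ha : Function.Injective a) (hv : ∀ i, v i ≠ 0) :
    ¬ GRSsub n k r a v ⊆ dualCode (GRSsub n k r a v) := by
  intro hC
  have hsq : (fun t => v t ^ 2) = 0 :=
    Matrix.eq_zero_of_forall_pow_sum_mul_pow_eq_zero ha fun s =>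
      sum_sq_mul_pow_eq_zero_of_subset_dualCode hC hr hrk (hnk ▸ s.isLt)
  have t : Fin n := ⟨0, by omega⟩
  exact pow_ne_zero 2 (hv t) (congrFun hsq t)

end GRSsub

theorem GRSsub_not_selfdual_general {F : Type*} [Field F] {n k r : ℕ}
    (hnk : n = 2 * k) (hr1 : 2 ≤ r) (hr2 : r ≤ k - 2)
    (a v : Fin n → F) (ha : Function.Injective a) (hv : ∀ i, v i ≠ 0) :
    GRSsub n k r a v ≠ dualCode (GRSsub n k r a v) := fun hC =>
  GRSsub_not_subset_dualCode hnk hr1 (by omega) ha hv hC.subset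

theorem GRSsub_not_selfdual {F : Type*} [Field F] [Fintype F] {n k r : ℕ}
    (hnk : n = 2 * k) (hn : 8 ≤ n) (hr1 : 2 ≤ r) (hr2 : r ≤ k - 2)
    (a v : Fin n → F) (ha : Function.Injective a) (hv : ∀ i, v i ≠ 0) :
    GRSsub n k r a v ≠ dualCode (GRSsub n k r a v) :=
  GRSsub_not_selfdual_general hnk hr1 hr2 a v ha hv
end

section
/- Let n = 2k ≥ 8 and let a_1,...,a_n ∈ F_q be pairwise distinct with u_i = ∏_{j≠i}(a_j - a_i)^{-1} and t_1 = ∑_i a_i. Then there exist nonzero v_1,...,v_n ∈ F_q such that GRS_{k,1}(a,v) is self-dual if and only if t_1 = 0 and u_1,...,u_n are either all squares in F_q or all non-squares in F_q. -/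
/-!
Write `ε = (-1)^(n-1)`. Lagrange interpolation at the nodes `a_i` gives, for every `g` of degree
at most `n`, `∑ u_i g(a_i) = ε (g_{n-1} + g_n t_1)`: the moments `∑ u_i a_i^m` vanish for
`m ≤ n - 2`, equal `ε` for `m = n - 1` and `ε t_1` for `m = n`.

Products of two messages `x^p x^q` with `p, q ∈ {0, …, k} \ {k-1}` realise every exponent
`j ≤ n - 2` and `j = n`, so self-orthogonality of the code forces `∑ v_i² a_i^j = 0` for these `j`.
By invertibility of the Vandermonde matrix the first conditions make `(v_i²)` a multiple `λ u` of
`u`, and then `j = n` reads `λ ε t_1 = 0`. Conversely, if `v_i² = λ u_i` and `t_1 = 0`, the identity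
shows that the code is self-orthogonal, because products of messages have degree `≤ n` and no
`x^{n-1}` term; having dimension `k = n / 2`, it is then self-dual. Finally, in a finite field some
`λ ≠ 0` makes every `λ u_i` a square exactly when the `u_i` lie in a single square class.
-/

open Finset Polynomial

open Module

namespace Lagrange

variable {F ι : Type*} [Field F] [DecidableEq ι] {s : Finset ι} {v : ι → F}

theorem sum_eval_div_prod_sub_of_natDegree_le (hvs : Set.InjOn v s) (hs : s.Nonempty)
    {P : F[X]} (hP : P.natDegree ≤ #s) :
    ∑ i ∈ s, P.eval (v i) / ∏ j ∈ s.erase i, (v i - v j) =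
      P.coeff (#s - 1) + P.coeff #s * ∑ i ∈ s, v i := by
  set Q := P - C (P.coeff #s) * nodal s v
  have hQ : Q.degree < #s := by
    rw [degree_lt_iff_coeff_zero]
    intro m hm
    obtain rfl | hm := hm.eq_or_lt
    · have h1 : (nodal s v).coeff #s = 1 := by
        simpa [natDegree_nodal] using (nodal_monic (s := s) (v := v)).coeff_natDegree
      simp [Q, h1]
    · simp [Q, coeff_eq_zero_of_natDegree_lt (hP.trans_lt hm),
        coeff_eq_zero_of_natDegree_lt (natDegree_nodal.trans_lt hm : (nodal s v).natDegree < m)]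
  have hnodal : (nodal s v).coeff (#s - 1) = -∑ i ∈ s, v i := by
    rw [nodal_eq]
    exact prod_X_sub_C_coeff_card_pred s v hs.card_pos
  calc ∑ i ∈ s, P.eval (v i) / ∏ j ∈ s.erase i, (v i - v j)
      = ∑ i ∈ s, Q.eval (v i) / ∏ j ∈ s.erase i, (v i - v j) :=
        sum_congr rfl fun i hi => by simp [Q, eval_nodal_at_node hi]
    _ = P.coeff (#s - 1) + P.coeff #s * ∑ i ∈ s, v i := by
        rw [← coeff_eq_sum hvs hQ]
        simp [Q, hnodal]

end Lagrange

section Moments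

variable {F : Type*} [Field F] {n : ℕ} {a u : Fin n → F}

theorem sum_mul_eval_eq (ha : Function.Injective a)
    (hu : ∀ i, u i = ∏ j ∈ univ.erase i, (a j - a i)⁻¹) (hn : n ≠ 0) {P : F[X]}
    (hP : P.natDegree ≤ n) :
    ∑ i, u i * P.eval (a i) = (-1) ^ (n - 1) * (P.coeff (n - 1) + P.coeff n * ∑ i, a i) := by
  have hcard : #(univ : Finset (Fin n)) = n := card_fin n
  have hlagrange := Lagrange.sum_eval_div_prod_sub_of_natDegree_le ha.injOn
    (univ_nonempty_iff.mpr ⟨⟨0, by omega⟩⟩) (hcard ▸ hP)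
  rw [hcard] at hlagrange
  rw [← hlagrange, mul_sum]
  refine sum_congr rfl fun i _ => ?_
  have hsign :
      ∏ j ∈ univ.erase i, (a j - a i) = (-1) ^ (n - 1) * ∏ j ∈ univ.erase i, (a i - a j) := by
    have : #(univ.erase i) = n - 1 := by rw [card_erase_of_mem (mem_univ i), hcard]
    rw [← this, ← prod_neg]
    simp
  rw [hu, prod_inv_distrib, hsign, mul_inv, ← inv_pow, inv_neg_one, div_eq_mul_inv]
  ring

theorem sum_mul_pow_eq_zero (ha : Function.Injective a)
    (hu : ∀ i, u i = ∏ j ∈ univ.erase i, (a j - a i)⁻¹) {m : ℕ} (hm : m + 2 ≤ n) :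
    ∑ i, u i * a i ^ m = 0 := by
  have := sum_mul_eval_eq ha hu (by omega) (P := X ^ m) (by simp; omega)
  simpa [coeff_X_pow, show n - 1 ≠ m by omega, show n ≠ m by omega] using this

theorem sum_mul_pow_pred (ha : Function.Injective a)
    (hu : ∀ i, u i = ∏ j ∈ univ.erase i, (a j - a i)⁻¹) (hn : n ≠ 0) :
    ∑ i, u i * a i ^ (n - 1) = (-1) ^ (n - 1) := by
  have := sum_mul_eval_eq ha hu hn (P := X ^ (n - 1)) (by simp)
  simpa [coeff_X_pow, show n ≠ n - 1 by omega] using this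

theorem sum_mul_pow_self (ha : Function.Injective a)
    (hu : ∀ i, u i = ∏ j ∈ univ.erase i, (a j - a i)⁻¹) (hn : n ≠ 0) :
    ∑ i, u i * a i ^ n = (-1) ^ (n - 1) * ∑ i, a i := by
  have := sum_mul_eval_eq ha hu hn (P := X ^ n) (by simp)
  simpa [coeff_X_pow, show n - 1 ≠ n by omega] using this

theorem eq_zero_of_sum_mul_pow_eq_zero {R : Type*} [CommRing R] [IsDomain R]
    {b w : Fin n → R} (hb : Function.Injective b) (hw : ∀ m < n, ∑ i, w i * b i ^ m = 0) : w = 0 :=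
  Matrix.eq_zero_of_vecMul_eq_zero (Matrix.det_vandermonde_ne_zero_iff.mpr hb) <|
    funext fun m => by simpa [Matrix.vecMul, dotProduct, Matrix.vandermonde] using hw m m.2

theorem exists_eq_smul_of_sum_mul_pow_eq_zero (ha : Function.Injective a)
    (hu : ∀ i, u i = ∏ j ∈ univ.erase i, (a j - a i)⁻¹) {w : Fin n → F}
    (hw : ∀ m, m + 2 ≤ n → ∑ i, w i * a i ^ m = 0) : ∃ c : F, w = c • u := by
  obtain rfl | hn := eq_or_ne n 0
  · exact ⟨0, Subsingleton.elim _ _⟩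
  set ε : F := (-1) ^ (n - 1)
  have hε : ε * ε = 1 := by rw [← pow_add, ← two_mul, pow_mul]; simp
  -- `∑ u_i a_i^(n-1) = ε` and `ε² = 1`, so this scalar matches the `(n-1)`-st moments
  refine ⟨ε * ∑ i, w i * a i ^ (n - 1), sub_eq_zero.mp (eq_zero_of_sum_mul_pow_eq_zero ha ?_)⟩
  intro m hm
  simp only [Pi.sub_apply, Pi.smul_apply, smul_eq_mul, sub_mul, sum_sub_distrib, mul_assoc,
    ← mul_sum]
  obtain hm | rfl : m + 2 ≤ n ∨ m = n - 1 := by omega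
  · rw [hw m hm, sum_mul_pow_eq_zero ha hu hm]; ring
  · rw [sum_mul_pow_pred ha hu hn]; linear_combination (-(∑ i, w i * a i ^ (n - 1))) * hε

theorem prod_inv_sub_ne_zero (ha : Function.Injective a) (i : Fin n) :
    ∏ j ∈ univ.erase i, (a j - a i)⁻¹ ≠ 0 :=
  prod_ne_zero_iff.mpr fun _ hj =>
    inv_ne_zero (sub_ne_zero_of_ne fun h => (mem_erase.mp hj).1 (ha h))

end Moments

theorem FiniteField.forall_isSquare_or_forall_not_isSquare_iff {F ι : Type*} [Field F]
    [Fintype F] {u : ι → F} (hu : ∀ i, u i ≠ 0) :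
    ((∀ i, IsSquare (u i)) ∨ ∀ i, ¬IsSquare (u i)) ↔ ∃ c ≠ 0, ∀ i, IsSquare (c * u i) := by
  classical
  constructor
  · rintro (hsq | hnsq)
    · exact ⟨1, one_ne_zero, by simpa using hsq⟩
    cases isEmpty_or_nonempty ι with
    | inl _ => exact ⟨1, one_ne_zero, isEmptyElim⟩
    | inr hι =>
      obtain ⟨i₀⟩ := hι
      refine ⟨u i₀, hu i₀, fun i => ?_⟩
      rw [← quadraticChar_one_iff_isSquare (mul_ne_zero (hu i₀) (hu i)), map_mul,
        quadraticChar_neg_one_iff_not_isSquare.mpr (hnsq i₀),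
        quadraticChar_neg_one_iff_not_isSquare.mpr (hnsq i)]
      norm_num
  · rintro ⟨c, hc, hsq⟩
    by_cases hcsq : IsSquare c
    · exact Or.inl fun i => by simpa [hc] using (hsq i).div hcsq
    · exact Or.inr fun i hui => hcsq (by simpa [hu i] using (hsq i).div hui)

section SelfDual

variable {F : Type*} [Field F] {n : ℕ}

theorem dualCode_eq_orthogonal (W : Submodule F (Fin n → F)) :
    dualCode (W : Set (Fin n → F)) =
      (Matrix.toBilin' (1 : Matrix (Fin n) (Fin n) F)).orthogonal W := by
  ext w
  simp [dualCode, LinearMap.BilinForm.mem_orthogonal_iff, Matrix.toBilin'_apply', dotProduct,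
    mul_comm]

theorem coe_eq_dualCode_of_subset (W : Submodule F (Fin n → F))
    (hW : (W : Set (Fin n → F)) ⊆ dualCode W) (hdim : 2 * finrank F W = n) :
    (W : Set (Fin n → F)) = dualCode W := by
  have hB : (Matrix.toBilin' (1 : Matrix (Fin n) (Fin n) F)).Nondegenerate :=
    Matrix.nondegenerate_toBilin'_iff.mpr (Matrix.nondegenerate_of_det_ne_zero (by simp))
  rw [dualCode_eq_orthogonal] at hW ⊢
  refine congrArg _ (Submodule.eq_of_le_of_finrank_le hW ?_)
  rw [LinearMap.BilinForm.finrank_orthogonal hB, finrank_fin_fun]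
  omega

end SelfDual

noncomputable def GRSsubPolys (F : Type*) [Field F] (k r : ℕ) : Submodule F F[X] :=
  degreeLT F (k + 1) ⊓ LinearMap.ker (lcoeff F (k - r))

section GRS

variable {F : Type*} [Field F] {n k r : ℕ}

theorem mem_GRSsubPolys {p : F[X]} :
    p ∈ GRSsubPolys F k r ↔ p.natDegree ≤ k ∧ p.coeff (k - r) = 0 := by
  simp [GRSsubPolys, degreeLT_succ_eq_degreeLE, mem_degreeLE, natDegree_le_iff_degree_le]

theorem finrank_GRSsubPolys : finrank F (GRSsubPolys F k r) = k := by
  set φ := (lcoeff F (k - r)).domRestrict (degreeLT F (k + 1))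
  have hX : X ^ (k - r) ∈ degreeLT F (k + 1) := by
    rw [mem_degreeLT, degree_X_pow]
    exact_mod_cast Nat.lt_succ_of_le (Nat.sub_le k r)
  have hφ : φ ≠ 0 := fun h => by simpa [φ] using LinearMap.congr_fun h ⟨_, hX⟩
  have := (degreeLTEquiv F (k + 1)).symm.finiteDimensional
  have hker := Module.Dual.finrank_ker_add_one_of_ne_zero hφ
  rw [(degreeLTEquiv F (k + 1)).finrank_eq, finrank_fin_fun] at hker
  rw [GRSsubPolys, ← Submodule.map_comap_subtype, Submodule.finrank_map_subtype_eq,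
    ← LinearMap.ker_domRestrict]
  exact Nat.add_right_cancel hker

noncomputable def weightedEval (a v : Fin n → F) : F[X] →ₗ[F] Fin n → F :=
  LinearMap.pi fun i => v i • leval (a i)

theorem weightedEval_apply (a v : Fin n → F) (p : F[X]) (i : Fin n) :
    weightedEval a v p i = v i * p.eval (a i) := rfl

theorem GRSsub_eq_map (a v : Fin n → F) :
    GRSsub n k r a v = (GRSsubPolys F k r).map (weightedEval a v) := by
  ext c
  simp only [GRSsub, Set.mem_ofPred_eq, SetLike.mem_coe, Submodule.mem_map, mem_GRSsubPolys,
    funext_iff, weightedEval_apply, and_assoc, eq_comm (a := c _)]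

theorem finrank_map_weightedEval {a v : Fin n → F} (ha : Function.Injective a)
    (hv : ∀ i, v i ≠ 0) (hk : k < n) :
    finrank F ((GRSsubPolys F k r).map (weightedEval a v)) = k := by
  rw [← LinearMap.range_domRestrict, LinearMap.finrank_range_of_inj, finrank_GRSsubPolys]
  rw [LinearMap.injective_domRestrict_iff, Submodule.disjoint_def]
  intro p hp hker
  refine eq_zero_of_natDegree_lt_card_of_eval_eq_zero p ha (fun i => ?_) ?_
  · simpa [hv i, weightedEval_apply] using congrFun (LinearMap.mem_ker.mp hker) i
  · simpa using (mem_GRSsubPolys.mp hp).1.trans_lt hk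

theorem GRSsub_eq_dualCode_of_subset {a v : Fin n → F} (ha : Function.Injective a)
    (hv : ∀ i, v i ≠ 0) (hnk : n = 2 * k)
    (h : GRSsub n k r a v ⊆ dualCode (GRSsub n k r a v)) :
    GRSsub n k r a v = dualCode (GRSsub n k r a v) := by
  rw [GRSsub_eq_map] at h ⊢
  refine coe_eq_dualCode_of_subset _ h ?_
  obtain rfl | hk := eq_or_ne k 0
  · simpa [hnk] using Submodule.finrank_le ((GRSsubPolys F 0 r).map (weightedEval a v))
  · rw [finrank_map_weightedEval ha hv (by omega)]
    omega

end GRS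

section SelfDualGRS

theorem coeff_mul_two_mul_sub_one_eq_zero {R : Type*} [Semiring R] {k : ℕ} {f g : R[X]}
    (hf : f.natDegree ≤ k) (hg : g.natDegree ≤ k) (hf' : f.coeff (k - 1) = 0)
    (hg' : g.coeff (k - 1) = 0) : (f * g).coeff (2 * k - 1) = 0 := by
  rw [coeff_mul]
  refine sum_eq_zero fun x hx => ?_
  rw [HasAntidiagonal.mem_antidiagonal] at hx
  obtain h | h | h | h : x.1 = k - 1 ∨ x.2 = k - 1 ∨ k < x.1 ∨ k < x.2 := by omega
  · rw [h, hf', zero_mul]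
  · rw [h, hg', mul_zero]
  · rw [coeff_eq_zero_of_natDegree_lt (hf.trans_lt h), zero_mul]
  · rw [coeff_eq_zero_of_natDegree_lt (hg.trans_lt h), mul_zero]

variable {F : Type*} [Field F] {n k : ℕ} {a u v : Fin n → F}

theorem GRSsub_one_subset_dualCode (ha : Function.Injective a)
    (hu : ∀ i, u i = ∏ j ∈ univ.erase i, (a j - a i)⁻¹) (hnk : n = 2 * k) (ht : ∑ i, a i = 0)
    {c : F} (hvu : ∀ i, c * u i = v i * v i) :
    GRSsub n k 1 a v ⊆ dualCode (GRSsub n k 1 a v) := by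
  obtain rfl | hn := eq_or_ne n 0
  · intro x _ y _
    simp
  rintro x ⟨f, hf, hf', hx⟩ y ⟨g, hg, hg', hy⟩
  calc ∑ i, x i * y i = c * ∑ i, u i * (f * g).eval (a i) := by
        rw [mul_sum]
        refine sum_congr rfl fun i _ => ?_
        rw [hx, hy, eval_mul]
        linear_combination (-(f.eval (a i) * g.eval (a i))) * hvu i
    _ = 0 := by
        have hcoeff : (f * g).coeff (n - 1) = 0 :=
          hnk ▸ coeff_mul_two_mul_sub_one_eq_zero hf hg hf' hg'
        rw [sum_mul_eval_eq ha hu hn (natDegree_mul_le.trans (by omega)), hcoeff, ht]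
        ring

theorem sum_mul_self_mul_pow_eq_zero (hnk : n = 2 * k) (hk : 3 ≤ k)
    (h : GRSsub n k 1 a v ⊆ dualCode (GRSsub n k 1 a v)) {j : ℕ} (hj : j + 2 ≤ n ∨ j = n) :
    ∑ i, v i * v i * a i ^ j = 0 := by
  obtain ⟨p, q, hp, hq, rfl⟩ : ∃ p q, (p ≤ k ∧ p ≠ k - 1) ∧ (q ≤ k ∧ q ≠ k - 1) ∧ p + q = j := by
    obtain hj' | rfl | hj' : j < k - 1 ∨ j = k - 1 ∨ k ≤ j := by omega
    exacts [⟨j, 0, by omega⟩, ⟨k - 2, 1, by omega⟩, ⟨k, j - k, by omega⟩]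
  have hmem {e : ℕ} (he : e ≤ k ∧ e ≠ k - 1) : (fun i => v i * a i ^ e) ∈ GRSsub n k 1 a v :=
    ⟨X ^ e, by simpa using he.1, by simp [coeff_X_pow, he.2.symm], fun i => by simp⟩
  simpa [pow_add, mul_mul_mul_comm] using h (hmem hp) _ (hmem hq)

theorem sum_eq_zero_and_exists_of_subset_dualCode (ha : Function.Injective a)
    (hu : ∀ i, u i = ∏ j ∈ univ.erase i, (a j - a i)⁻¹) (hnk : n = 2 * k) (hk : 3 ≤ k)
    (hv : ∀ i, v i ≠ 0) (h : GRSsub n k 1 a v ⊆ dualCode (GRSsub n k 1 a v)) :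
    ∑ i, a i = 0 ∧ ∃ c ≠ 0, ∀ i, c * u i = v i * v i := by
  obtain ⟨c, hc⟩ := exists_eq_smul_of_sum_mul_pow_eq_zero ha hu (w := fun i => v i * v i)
    fun m hm => sum_mul_self_mul_pow_eq_zero hnk hk h (Or.inl hm)
  have hvu : ∀ i, c * u i = v i * v i := fun i => (congrFun hc i).symm
  have hc0 : c ≠ 0 := by
    rintro rfl
    exact mul_self_ne_zero.mpr (hv ⟨0, by omega⟩) (by simpa using (hvu ⟨0, by omega⟩).symm)
  refine ⟨?_, c, hc0, hvu⟩
  have htop := sum_mul_self_mul_pow_eq_zero hnk hk h (Or.inr rfl)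
  simp_rw [← hvu, mul_assoc, ← mul_sum, sum_mul_pow_self ha hu (by omega)] at htop
  simpa [hc0] using htop

end SelfDualGRS

theorem GRSsub_one_selfdual_iff {F : Type*} [Field F] [Fintype F] {n k : ℕ}
    (hnk : n = 2 * k) (hn : 8 ≤ n)
    (a : Fin n → F) (ha : Function.Injective a)
    (u : Fin n → F) (hu : ∀ i, u i = ∏ j ∈ univ.erase i, (a j - a i)⁻¹) :
    (∃ v : Fin n → F, (∀ i, v i ≠ 0) ∧ GRSsub n k 1 a v = dualCode (GRSsub n k 1 a v)) ↔
      (∑ i, a i = 0 ∧ ((∀ i, IsSquare (u i)) ∨ ∀ i, ¬ IsSquare (u i))) := by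
  have hu0 : ∀ i, u i ≠ 0 := fun i => hu i ▸ prod_inv_sub_ne_zero ha i
  rw [FiniteField.forall_isSquare_or_forall_not_isSquare_iff hu0]
  constructor
  · rintro ⟨v, hv, hself⟩
    obtain ⟨ht, c, hc, hvu⟩ :=
      sum_eq_zero_and_exists_of_subset_dualCode ha hu hnk (by omega) hv hself.subset
    exact ⟨ht, c, hc, fun i => ⟨v i, hvu i⟩⟩
  · rintro ⟨ht, c, hc, hsq⟩
    choose v hvu using hsq
    have hv : ∀ i, v i ≠ 0 := fun i hvi => mul_ne_zero hc (hu0 i) (by simp [hvu i, hvi])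
    exact ⟨v, hv,
      GRSsub_eq_dualCode_of_subset ha hv hnk (GRSsub_one_subset_dualCode ha hu hnk ht hvu)⟩
end

section
/- Let a_1,...,a_{k-1} ∈ F_q be pairwise distinct and 2 ≤ r ≤ k-1. Let G_r be the k × (k-1) matrix whose rows are (a_1^j,...,a_{k-1}^j) for j ∈ {0,...,k} \ {k-r}. Then G_r has rank at least k-2, and G_r has rank k-1 if and only if s_{k-1,r-1}(a_1,...,a_{k-1}) and s_{k-1,r}(a_1,...,a_{k-1}) are not both zero. -/
/-!
A vector `c` in the kernel of `Gᵀ` is the coefficient vector of the polynomial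
`Q = ∑ⱼ cⱼ X ^ eⱼ`, whose exponents `eⱼ` run over `0, …, k` except `k - r`, and `Q` vanishes at
every `aᵢ`. As the `aᵢ` are distinct and `deg Q ≤ k`, this says `Q = (α + β X) P` with
`P = ∏ᵢ (X - aᵢ)` of degree `k - 1`. The missing exponent leaves the single linear condition
`α [X ^ (k - r)] P + β [X ^ (k - r - 1)] P = 0` on `(α, β)`, and by Vieta these two coefficients
are `± s_{k-1,r-1}` and `± s_{k-1,r}`. So the kernel has dimension `2` if both vanish and `1`
otherwise.
-/

open Finset Polynomial Module Lagrange

namespace Polynomial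

/-- The `j`-th natural number different from `d`; `gapExp (k - r)` maps `Fin k` onto `J(k, r)`. -/
def gapExp (d j : ℕ) : ℕ := if j < d then j else j + 1

lemma gapExp_injective (d : ℕ) : Function.Injective (gapExp d) := by
  intro i j h
  simp only [gapExp] at h
  split_ifs at h <;> omega

lemma gapExp_ne (d j : ℕ) : gapExp d j ≠ d := by
  unfold gapExp; split_ifs <;> omega

lemma gapExp_le_iff {d k j : ℕ} (hd : d ≤ k) : gapExp d j ≤ k ↔ j < k := by
  unfold gapExp; split_ifs <;> omega

lemma exists_gapExp_eq {d m : ℕ} (hm : m ≠ d) : ∃ j, gapExp d j = m := by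
  rcases lt_or_gt_of_ne hm with h | h
  · exact ⟨m, if_pos h⟩
  · exact ⟨m - 1, by unfold gapExp; split_ifs <;> omega⟩

section GapPoly

variable {R : Type*} [CommSemiring R] {k d : ℕ}

variable (R k d) in
noncomputable def gapPoly : (Fin k → R) →ₗ[R] R[X] :=
  Fintype.linearCombination R fun j => X ^ gapExp d j

lemma gapPoly_apply (c : Fin k → R) : gapPoly R k d c = ∑ j, c j • X ^ gapExp d j :=
  Fintype.linearCombination_apply ..

lemma coeff_gapPoly (c : Fin k → R) (m : ℕ) :
    (gapPoly R k d c).coeff m = ∑ j : Fin k, if m = gapExp d j then c j else 0 := by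
  simp [gapPoly_apply, finsetSum_coeff, coeff_X_pow]

lemma coeff_gapPoly_gapExp (c : Fin k → R) (j : Fin k) :
    (gapPoly R k d c).coeff (gapExp d j) = c j := by
  rw [coeff_gapPoly, Fintype.sum_eq_single j]
  · simp
  · intro i hi
    exact if_neg fun h => hi (Fin.ext (gapExp_injective d h).symm)

lemma coeff_gapPoly_self (c : Fin k → R) : (gapPoly R k d c).coeff d = 0 := by
  simp [coeff_gapPoly, (gapExp_ne d _).symm]

lemma natDegree_gapPoly_le (hd : d ≤ k) (c : Fin k → R) : (gapPoly R k d c).natDegree ≤ k := by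
  rw [gapPoly_apply]
  refine natDegree_sum_le_of_forall_le _ _ fun j _ => ?_
  exact (natDegree_smul_le _ _).trans <| (natDegree_X_pow_le _).trans ((gapExp_le_iff hd).2 j.2)

lemma gapPoly_injective : Function.Injective (gapPoly R k d) := fun c c' h =>
  _root_.funext fun j => by rw [← coeff_gapPoly_gapExp c j, h, coeff_gapPoly_gapExp]

lemma mem_range_gapPoly_iff (hd : d ≤ k) {Q : R[X]} :
    Q ∈ LinearMap.range (gapPoly R k d) ↔ Q.natDegree ≤ k ∧ Q.coeff d = 0 := by
  constructor
  · rintro ⟨c, rfl⟩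
    exact ⟨natDegree_gapPoly_le hd c, coeff_gapPoly_self c⟩
  rintro ⟨hQk, hQd⟩
  refine ⟨fun j => Q.coeff (gapExp d j), Polynomial.ext fun m => ?_⟩
  by_cases hmd : m = d
  · rw [hmd, coeff_gapPoly_self, hQd]
  by_cases hmk : k < m
  · rw [coeff_eq_zero_of_natDegree_lt (hQk.trans_lt hmk),
      coeff_eq_zero_of_natDegree_lt ((natDegree_gapPoly_le hd _).trans_lt hmk)]
  obtain ⟨j, rfl⟩ := exists_gapExp_eq hmd
  exact coeff_gapPoly_gapExp (k := k) _ ⟨j, (gapExp_le_iff hd).1 (not_lt.1 hmk)⟩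

lemma eval_gapPoly (c : Fin k → R) (x : R) :
    (gapPoly R k d c).eval x = ∑ j, c j * x ^ gapExp d j := by
  simp [gapPoly_apply, eval_finsetSum]

end GapPoly

section MulAffine

variable {F : Type*} [Field F]

noncomputable def mulAffine (P : F[X]) : F × F →ₗ[F] F[X] :=
  (LinearMap.toSpanSingleton F F[X] P).coprod (LinearMap.toSpanSingleton F F[X] (X * P))

lemma mulAffine_apply (P : F[X]) (p : F × F) : mulAffine P p = (C p.1 + C p.2 * X) * P := by
  simp [mulAffine, smul_eq_C_mul]
  ring

lemma mulAffine_injective {P : F[X]} (hP : P ≠ 0) : Function.Injective (mulAffine P) := by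
  rw [← LinearMap.ker_eq_bot, LinearMap.ker_eq_bot']
  rintro ⟨α, β⟩ h
  rw [mulAffine_apply, mul_eq_zero, or_iff_left hP] at h
  have h0 := congrArg (coeff · 0) h
  have h1 := congrArg (coeff · 1) h
  simp only [coeff_add, coeff_C, coeff_C_mul_X, coeff_zero] at h0 h1
  simp_all

lemma mem_range_mulAffine_iff {P : F[X]} (hP : P ≠ 0) {Q : F[X]} :
    Q ∈ LinearMap.range (mulAffine P) ↔ Q.natDegree ≤ P.natDegree + 1 ∧ P ∣ Q := by
  constructor
  · rintro ⟨p, rfl⟩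
    rw [mulAffine_apply]
    refine ⟨natDegree_mul_le.trans ?_, dvd_mul_left _ _⟩
    have : (C p.1 + C p.2 * X).natDegree ≤ 1 := by compute_degree
    omega
  rintro ⟨hQ, S, rfl⟩
  obtain rfl | hS := eq_or_ne S 0
  · exact ⟨0, by simp⟩
  rw [natDegree_mul hP hS, add_le_add_iff_left] at hQ
  refine ⟨(S.coeff 0, S.coeff 1), ?_⟩
  rw [mulAffine_apply, mul_comm P, eq_X_add_C_of_natDegree_le_one hQ]
  simp [add_comm]

lemma coeff_mulAffine (P : F[X]) (p : F × F) {d : ℕ} (hd : 1 ≤ d) :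
    (mulAffine P p).coeff d = p.1 * P.coeff d + p.2 * P.coeff (d - 1) := by
  obtain ⟨d, rfl⟩ := Nat.exists_eq_add_of_le' hd
  simp [mulAffine_apply, add_mul, mul_assoc, coeff_C_mul, coeff_X_mul]

open Classical in
lemma finrank_ker_lcoeff_comp_mulAffine (P : F[X]) {d : ℕ} (hd : 1 ≤ d) :
    finrank F (LinearMap.ker (lcoeff F d ∘ₗ mulAffine P)) =
      if P.coeff d = 0 ∧ P.coeff (d - 1) = 0 then 2 else 1 := by
  have hf : ∀ p, (lcoeff F d ∘ₗ mulAffine P) p = p.1 * P.coeff d + p.2 * P.coeff (d - 1) :=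
    fun p => coeff_mulAffine P p hd
  split_ifs with h
  · have : lcoeff F d ∘ₗ mulAffine P = 0 := LinearMap.ext fun p => by simp [hf, h]
    rw [this, LinearMap.ker_zero, finrank_top, finrank_prod, finrank_self]
  · have : lcoeff F d ∘ₗ mulAffine P ≠ 0 := fun h0 => h
      ⟨by simpa [hf] using LinearMap.congr_fun h0 (1, 0),
        by simpa [hf] using LinearMap.congr_fun h0 (0, 1)⟩
    have := Module.Dual.finrank_ker_add_one_of_ne_zero this
    simp only [finrank_prod, finrank_self] at this
    omega

end MulAffine

section Nodal

variable {F : Type*} [Field F] {ι : Type*} {s : Finset ι} {v : ι → F}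

lemma nodal_dvd_iff (hv : Set.InjOn v s) {Q : F[X]} :
    nodal s v ∣ Q ↔ ∀ i ∈ s, Q.eval (v i) = 0 := by
  refine ⟨fun h i hi => ?_, fun h => ?_⟩
  · exact dvd_iff_isRoot.1 ((X_sub_C_dvd_nodal v hi).trans h)
  · rw [nodal_eq]
    refine Finset.prod_dvd_of_coprime (fun i hi j hj hij => ?_) fun i hi =>
      dvd_iff_isRoot.2 (h i hi)
    exact isCoprime_X_sub_C_of_isUnit_sub (sub_ne_zero.2 (hv.ne hi hj hij)).isUnit

lemma coeff_nodal {m : ℕ} (hm : m ≤ #s) :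
    (nodal s v).coeff m = (-1) ^ (#s - m) * ∑ t ∈ s.powersetCard (#s - m), ∏ i ∈ t, v i := by
  rw [nodal_eq, Finset.prod, ← Function.comp_def (fun x => X - C x) v, ← Multiset.map_map,
    Multiset.prod_X_sub_C_coeff _ (by simpa using hm), Multiset.card_map, Finset.esymm_map_val]
  rfl

end Nodal

lemma finrank_ker_pi_leval_comp_gapPoly {F : Type*} [Field F] {ι : Type*} [Fintype ι]
    {a : ι → F} (ha : Function.Injective a) {k d : ℕ} (hdk : d ≤ k)
    (hk : Fintype.card ι + 1 = k) :
    finrank F (LinearMap.ker (LinearMap.pi (fun i => leval (a i)) ∘ₗ gapPoly F k d)) =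
      finrank F (LinearMap.ker (lcoeff F d ∘ₗ mulAffine (nodal univ a))) := by
  have hP : nodal univ a ≠ 0 := nodal_ne_zero
  have hmap : (LinearMap.ker (LinearMap.pi (fun i => leval (a i)) ∘ₗ gapPoly F k d)).map
      (gapPoly F k d) = (LinearMap.ker (lcoeff F d ∘ₗ mulAffine (nodal univ a))).map
        (mulAffine (nodal univ a)) := by
    rw [LinearMap.ker_comp, LinearMap.ker_comp, Submodule.map_comap_eq, Submodule.map_comap_eq]
    ext Q
    simp only [Submodule.mem_inf, mem_range_gapPoly_iff hdk, mem_range_mulAffine_iff hP,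
      LinearMap.mem_ker, natDegree_nodal, nodal_dvd_iff ha.injOn, card_univ, hk]
    simp [funext_iff]
    tauto
  rw [(Submodule.equivMapOfInjective _ gapPoly_injective _).finrank_eq, hmap,
    ← (Submodule.equivMapOfInjective _ (mulAffine_injective hP) _).finrank_eq]

end Polynomial

theorem rank_Gr_general {F : Type*} [Field F] {k r : ℕ}
    (hr1 : 2 ≤ r) (hr2 : r ≤ k - 1)
    (a : Fin (k - 1) → F) (ha : Function.Injective a)
    (G : Matrix (Fin k) (Fin (k - 1)) F)
    (hG : ∀ (j : Fin k) (i : Fin (k - 1)),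
      G j i = a i ^ (if (j : ℕ) < k - r then (j : ℕ) else (j : ℕ) + 1)) :
    k - 2 ≤ G.rank ∧
      (G.rank = k - 1 ↔
        ¬((∑ t ∈ (univ : Finset (Fin (k - 1))).powersetCard (r - 1), ∏ i ∈ t, a i) = 0 ∧
          (∑ t ∈ (univ : Finset (Fin (k - 1))).powersetCard r, ∏ i ∈ t, a i) = 0)) := by
  classical
  have hGpoly : G.transpose.mulVecLin =
      LinearMap.pi (fun i => leval (a i)) ∘ₗ gapPoly F k (k - r) := by
    refine LinearMap.ext fun c => funext fun i => ?_
    simp [Matrix.vecMul, dotProduct, hG, eval_gapPoly, gapExp, apply_ite]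
  have hrank : G.rank + finrank F (LinearMap.ker G.transpose.mulVecLin) = k := by
    rw [← Matrix.rank_transpose]
    exact (LinearMap.finrank_range_add_finrank_ker _).trans (by simp)
  rw [hGpoly, finrank_ker_pi_leval_comp_gapPoly ha (by omega) (by simp; omega),
    finrank_ker_lcoeff_comp_mulAffine _ (by omega)] at hrank
  have hcoeff : ∀ m, 1 ≤ m → m ≤ k → ((nodal univ a).coeff (k - m) = 0 ↔
      ∑ t ∈ (univ : Finset (Fin (k - 1))).powersetCard (m - 1), ∏ i ∈ t, a i = 0) := by
    intro m hm1 hmk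
    rw [coeff_nodal (by simp; omega), card_univ, Fintype.card_fin,
      show k - 1 - (k - m) = m - 1 by omega]
    simp
  rw [hcoeff r (by omega) (by omega), show k - r - 1 = k - (r + 1) by omega,
    hcoeff (r + 1) (by omega) (by omega), Nat.add_sub_cancel] at hrank
  split_ifs at hrank with h
  · exact ⟨by omega, iff_of_false (by omega) (not_not.2 h)⟩
  · exact ⟨by omega, iff_of_true (by omega) h⟩

theorem rank_Gr {F : Type*} [Field F] [Fintype F] {k r : ℕ}
    (hr1 : 2 ≤ r) (hr2 : r ≤ k - 1)
    (a : Fin (k - 1) → F) (ha : Function.Injective a)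
    (G : Matrix (Fin k) (Fin (k - 1)) F)
    (hG : ∀ (j : Fin k) (i : Fin (k - 1)),
      G j i = a i ^ (if (j : ℕ) < k - r then (j : ℕ) else (j : ℕ) + 1)) :
    k - 2 ≤ G.rank ∧
      (G.rank = k - 1 ↔
        ¬((∑ t ∈ (univ : Finset (Fin (k - 1))).powersetCard (r - 1), ∏ i ∈ t, a i) = 0 ∧
          (∑ t ∈ (univ : Finset (Fin (k - 1))).powersetCard r, ∏ i ∈ t, a i) = 0)) :=
  rank_Gr_general hr1 hr2 a ha G hG
end

section
/- Let a_1,...,a_{k-1} ∈ F_q be pairwise distinct and 2 ≤ r ≤ k-1. There exists a monic polynomial f ∈ F_q[x] of degree at most k with coefficient of x^{k-r} equal to zero and vanishing at all of a_1,...,a_{k-1}; moreover this f is unique if and only if s_{k-1,r-1}(a_1,...,a_{k-1}) and s_{k-1,r}(a_1,...,a_{k-1}) are not both zero. -/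
/-!
A monic polynomial of degree at most `k` vanishing at the `k - 1` distinct points `a i` is a
monic multiple of `g = ∏ (X - a i)` of degree at most one more, so it is either `g` or
`g * (X - b)`. By Vieta, the coefficient of `X ^ (k - r)` is `± s_{k-1,r-1}` for `g` and
`± (s_{k-1,r} + b s_{k-1,r-1})` for `g * (X - b)`: a linear condition on `b`, which has a unique
solution when `s_{k-1,r-1} ≠ 0`, none when only `s_{k-1,r-1}` vanishes (then `g` is the answer),
and every `b` when both vanish.
-/

open Finset Polynomial

section CommRing

variable {R : Type*} [CommRing R]

theorem Finset.prod_X_sub_C_coeff {ι : Type*} (s : Finset ι) (a : ι → R) {m : ℕ}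
    (hm : m ≤ #s) :
    (∏ i ∈ s, (X - C (a i))).coeff m =
      (-1) ^ (#s - m) * ∑ t ∈ s.powersetCard (#s - m), ∏ i ∈ t, a i := by
  have hmap : s.val.map (fun i => X - C (a i)) = (s.val.map a).map fun t => X - C t := by
    rw [Multiset.map_map]; rfl
  rw [Finset.prod_eq_multiset_prod, hmap, Multiset.prod_X_sub_C_coeff _ (by simpa using hm),
    Multiset.card_map, Finset.esymm_map_val]
  rfl

theorem Polynomial.Monic.eq_one_or_eq_X_sub_C {q : R[X]} (hq : q.Monic)
    (hdeg : q.natDegree ≤ 1) :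
    q = 1 ∨ ∃ b, q = X - C b := by
  rcases Nat.le_one_iff_eq_zero_or_eq_one.mp hdeg with h0 | h1
  · exact .inl (hq.natDegree_eq_zero.mp h0)
  · exact .inr ⟨-q.coeff 0, by rw [map_neg, sub_neg_eq_add]; exact hq.eq_X_add_C h1⟩

theorem Polynomial.Monic.eq_or_eq_mul_X_sub_C_of_dvd {g f : R[X]} (hg : g.Monic) (hf : f.Monic)
    (hdvd : g ∣ f) (hdeg : f.natDegree ≤ g.natDegree + 1) :
    f = g ∨ ∃ b, f = g * (X - C b) := by
  obtain ⟨q, rfl⟩ := hdvd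
  have hq : q.Monic := hg.of_mul_monic_left hf
  rw [hg.natDegree_mul hq] at hdeg
  rcases hq.eq_one_or_eq_X_sub_C (by omega) with rfl | ⟨b, rfl⟩
  · exact .inl (mul_one g)
  · exact .inr ⟨b, rfl⟩

end CommRing

section Field

variable {F : Type*} [Field F] {ι : Type*} [Fintype ι]

theorem prod_X_sub_C_dvd_of_eval_eq_zero {a : ι → F} (ha : Function.Injective a) {f : F[X]}
    (hf : ∀ i, f.eval (a i) = 0) :
    ∏ i, (X - C (a i)) ∣ f :=
  Fintype.prod_dvd_of_coprime (pairwise_coprime_X_sub_C ha) fun i => dvd_iff_isRoot.mpr (hf i)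

theorem monic_vanishing_iff_eq_prod_or_eq_prod_mul_X_sub_C {a : ι → F}
    (ha : Function.Injective a) (f : F[X]) :
    (f.Monic ∧ f.natDegree ≤ Fintype.card ι + 1 ∧ ∀ i, f.eval (a i) = 0) ↔
      f = ∏ i, (X - C (a i)) ∨ ∃ b, f = (∏ i, (X - C (a i))) * (X - C b) := by
  have hg : (∏ i, (X - C (a i))).Monic := monic_prod_X_sub_C a univ
  have hg_deg : (∏ i, (X - C (a i))).natDegree = Fintype.card ι := by simp
  have hg_eval (i : ι) : (∏ i, (X - C (a i))).eval (a i) = 0 := by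
    rw [eval_prod]
    exact prod_eq_zero (mem_univ i) (by simp)
  constructor
  · rintro ⟨hf, hdeg, hf_eval⟩
    exact hg.eq_or_eq_mul_X_sub_C_of_dvd hf (prod_X_sub_C_dvd_of_eval_eq_zero ha hf_eval)
      (hg_deg ▸ hdeg)
  · rintro (rfl | ⟨b, rfl⟩)
    · exact ⟨hg, by omega, hg_eval⟩
    · refine ⟨hg.mul (monic_X_sub_C b), ?_, fun i => by rw [eval_mul, hg_eval, zero_mul]⟩
      rw [hg.natDegree_mul (monic_X_sub_C b), hg_deg, natDegree_X_sub_C]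

theorem existsUnique_self_or_mul_X_sub_C_coeff_succ_eq_zero_iff {g : F[X]} (hg : g ≠ 0) (j : ℕ)
    (P : F[X] → Prop)
    (hP : ∀ f, P f ↔ (f = g ∨ ∃ b, f = g * (X - C b)) ∧ f.coeff (j + 1) = 0) :
    (∃ f, P f) ∧ ((∃! f, P f) ↔ ¬(g.coeff (j + 1) = 0 ∧ g.coeff j = 0)) := by
  have hP_g : P g ↔ g.coeff (j + 1) = 0 := by simp [hP]
  have hP_mul (b : F) : P (g * (X - C b)) ↔ g.coeff j - g.coeff (j + 1) * b = 0 := by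
    rw [hP, coeff_mul_X_sub_C]
    exact and_iff_right (.inr ⟨b, rfl⟩)
  have hg_ne_mul (b : F) : g ≠ g * (X - C b) := fun h => by
    have := congrArg natDegree h
    rw [natDegree_mul hg (X_sub_C_ne_zero b), natDegree_X_sub_C] at this
    omega
  refine ⟨?_, ⟨?_, ?_⟩⟩
  · by_cases h0 : g.coeff (j + 1) = 0
    · exact ⟨g, hP_g.mpr h0⟩
    · exact ⟨_, (hP_mul (g.coeff j / g.coeff (j + 1))).mpr (by field_simp; ring)⟩
  · rintro ⟨f, -, huniq⟩ ⟨h0, h1⟩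
    refine hg_ne_mul 0 ((huniq g (hP_g.mpr h0)).trans (huniq _ ((hP_mul 0).mpr ?_)).symm)
    rw [h0, h1, zero_mul, sub_zero]
  · intro hcoeff
    by_cases h0 : g.coeff (j + 1) = 0
    · refine ⟨g, hP_g.mpr h0, fun f hf => ?_⟩
      obtain ⟨rfl | ⟨b, rfl⟩, -⟩ := (hP f).mp hf
      · rfl
      · rw [hP_mul, h0, zero_mul, sub_zero] at hf
        exact absurd ⟨h0, hf⟩ hcoeff
    · refine ⟨_, (hP_mul (g.coeff j / g.coeff (j + 1))).mpr (by field_simp; ring),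
        fun f hf => ?_⟩
      obtain ⟨rfl | ⟨b, rfl⟩, -⟩ := (hP f).mp hf
      · exact absurd (hP_g.mp hf) h0
      · rw [hP_mul] at hf
        have hb : b = g.coeff j / g.coeff (j + 1) := by
          rw [eq_div_iff h0]
          linear_combination -hf
        rw [hb]

end Field

theorem monic_vanishing_poly_exists_unique_iff_general {F : Type*} [Field F] {k r : ℕ}
    (hr1 : 2 ≤ r) (hr2 : r ≤ k - 1)
    (a : Fin (k - 1) → F) (ha : Function.Injective a) :
    (∃ f : F[X], f.Monic ∧ f.natDegree ≤ k ∧ f.coeff (k - r) = 0 ∧ ∀ i, f.eval (a i) = 0) ∧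
      ((∃! f : F[X],
          f.Monic ∧ f.natDegree ≤ k ∧ f.coeff (k - r) = 0 ∧ ∀ i, f.eval (a i) = 0) ↔
        ¬((∑ t ∈ (univ : Finset (Fin (k - 1))).powersetCard (r - 1), ∏ i ∈ t, a i) = 0 ∧
          (∑ t ∈ (univ : Finset (Fin (k - 1))).powersetCard r, ∏ i ∈ t, a i) = 0)) := by
  obtain ⟨j, hj⟩ : ∃ j, k - r = j + 1 := ⟨k - r - 1, by omega⟩
  set g : F[X] := ∏ i, (X - C (a i))
  have hP (f : F[X]) :
      (f.Monic ∧ f.natDegree ≤ k ∧ f.coeff (k - r) = 0 ∧ ∀ i, f.eval (a i) = 0) ↔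
        (f = g ∨ ∃ b, f = g * (X - C b)) ∧ f.coeff (j + 1) = 0 := by
    rw [← monic_vanishing_iff_eq_prod_or_eq_prod_mul_X_sub_C ha, Fintype.card_fin, hj,
      Nat.sub_add_cancel (by omega : 1 ≤ k)]
    tauto
  have hg_coeff (m : ℕ) (hm : m ≤ k - 1) :
      g.coeff m = (-1) ^ (k - 1 - m) *
        ∑ t ∈ (univ : Finset (Fin (k - 1))).powersetCard (k - 1 - m), ∏ i ∈ t, a i := by
    simpa using Finset.prod_X_sub_C_coeff univ a (by simpa using hm)
  obtain ⟨hex, huniq⟩ := existsUnique_self_or_mul_X_sub_C_coeff_succ_eq_zero_iff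
    (monic_prod_X_sub_C a univ).ne_zero j _ hP
  refine ⟨hex, huniq.trans ?_⟩
  rw [hg_coeff _ (by omega), hg_coeff _ (by omega), show k - 1 - (j + 1) = r - 1 by omega,
    show k - 1 - j = r by omega]
  simp

theorem monic_vanishing_poly_exists_unique_iff {F : Type*} [Field F] [Fintype F] {k r : ℕ}
    (hr1 : 2 ≤ r) (hr2 : r ≤ k - 1)
    (a : Fin (k - 1) → F) (ha : Function.Injective a) :
    (∃ f : F[X], f.Monic ∧ f.natDegree ≤ k ∧ f.coeff (k - r) = 0 ∧ ∀ i, f.eval (a i) = 0) ∧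
      ((∃! f : F[X],
          f.Monic ∧ f.natDegree ≤ k ∧ f.coeff (k - r) = 0 ∧ ∀ i, f.eval (a i) = 0) ↔
        ¬((∑ t ∈ (univ : Finset (Fin (k - 1))).powersetCard (r - 1), ∏ i ∈ t, a i) = 0 ∧
          (∑ t ∈ (univ : Finset (Fin (k - 1))).powersetCard r, ∏ i ∈ t, a i) = 0)) :=
  monic_vanishing_poly_exists_unique_iff_general hr1 hr2 a ha
end

section
/- Let a_1,...,a_n ∈ F_q be pairwise distinct, 1 ≤ k ≤ n-1, 1 ≤ r ≤ k-1. The extended code GRS_{k,r}(a,v,∞) has minimum distance at least n-k+1 (so it is AMDS or MDS); and it is not MDS if and only if there exists a (k-1)-subset Z_1 of {a_1,...,a_n} with s_{r-1}(Z_1) = 0 or a k-subset Z_2 with s_r(Z_2) = 0. -/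
open Finset Polynomial

/-- The subcode `GRS_{k,r}(a,v,∞)` of the extended GRS code, of length `n+1`. -/
def GRSsubExt {F : Type*} [Field F] (n k r : ℕ) (a v : Fin n → F) : Set (Fin (n + 1) → F) :=
  {c | ∃ f : F[X], f.natDegree ≤ k ∧ f.coeff (k - r) = 0 ∧
    (∀ i : Fin n, c i.castSucc = v i * f.eval (a i)) ∧ c (Fin.last n) = f.coeff k}

/-- Hamming weight. -/
def wt {F : Type*} [DecidableEq F] [Zero F] {m : ℕ} (c : Fin m → F) : ℕ :=
  (Finset.univ.filter fun i => c i ≠ 0).card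

/-- Elementary symmetric value of degree `d` of a finite set of field elements. -/
def esymmSet {F : Type*} [CommRing F] (Z : Finset F) (d : ℕ) : F :=
  ∑ t ∈ Z.powersetCard d, ∏ x ∈ t, x

/-!
A nonzero codeword comes from a nonzero `f` with `deg f ≤ k`. Its weight is `n` minus the number
of evaluation points that are roots of `f`, plus one if `f[k] ≠ 0`; since `f` has at most
`deg f ≤ k - [f[k] = 0]` roots, the weight is at least `n - k + 1`. Equality forces `f` to vanish
on a set `Z` of `deg f ∈ {k - 1, k}` evaluation points, so `f = λ ∏_{z ∈ Z} (X - z)`, whose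
coefficient `f[k-r]` is `± λ s_{|Z|-(k-r)}(Z)` by Vieta. Conversely `∏_{z ∈ Z} (X - z)` is a
codeword of weight `n - k + 1` as soon as that symmetric function vanishes.
-/

section Polynomial

variable {R : Type*} [CommRing R]

theorem esymmSet_eq_esymm (S : Finset R) (d : ℕ) : esymmSet S d = S.val.esymm d := by
  simpa [esymmSet] using (esymm_map_val id S d).symm

theorem coeff_prod_X_sub_C_eq_esymmSet (S : Finset R) {j : ℕ} (hj : j ≤ #S) :
    (∏ z ∈ S, (X - C z)).coeff j = (-1) ^ (#S - j) * esymmSet S (#S - j) := by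
  rw [prod_eq_multiset_prod, esymmSet_eq_esymm]
  exact Multiset.prod_X_sub_C_coeff S.val hj

theorem natDegree_lt_of_coeff_eq_zero {f : R[X]} (hf : f ≠ 0) {k : ℕ}
    (hdeg : f.natDegree ≤ k) (hk : f.coeff k = 0) : f.natDegree < k :=
  hdeg.lt_of_ne fun h ↦ hf (leadingCoeff_eq_zero.1 (by rwa [leadingCoeff, h]))

variable [IsDomain R]

theorem card_filter_isRoot_le_natDegree [DecidableEq R] {f : R[X]} (hf : f ≠ 0) (S : Finset R) :
    #(S.filter f.IsRoot) ≤ f.natDegree :=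
  card_le_degree_of_subset_roots fun _ hx ↦ (mem_roots hf).2 (mem_filter.1 hx).2

theorem eq_C_leadingCoeff_mul_prod_of_forall_isRoot {f : R[X]} {S : Finset R}
    (hS : ∀ z ∈ S, f.IsRoot z) (hdeg : f.natDegree ≤ #S) :
    f = C f.leadingCoeff * ∏ z ∈ S, (X - C z) := by
  rcases eq_or_ne f 0 with rfl | hf
  · simp
  have hle : S.val ≤ f.roots :=
    (Multiset.le_iff_subset S.nodup).2 fun z hz ↦ (mem_roots hf).2 (hS z hz)
  have hroots : S.val = f.roots :=
    Multiset.eq_of_le_of_card_le hle ((card_roots' f).trans hdeg)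
  have hcard : Multiset.card f.roots = f.natDegree :=
    le_antisymm (card_roots' f) (hroots ▸ hdeg)
  conv_lhs => rw [← C_leadingCoeff_mul_prod_multiset_X_sub_C hcard, ← hroots]
  rw [prod_eq_multiset_prod]

theorem esymmSet_eq_zero_of_coeff_eq_zero {f : R[X]} (hf : f ≠ 0) {S : Finset R}
    (hS : ∀ z ∈ S, f.IsRoot z) (hdeg : f.natDegree ≤ #S) {j : ℕ} (hj : j ≤ #S)
    (hcoeff : f.coeff j = 0) : esymmSet S (#S - j) = 0 := by
  rw [eq_C_leadingCoeff_mul_prod_of_forall_isRoot hS hdeg, coeff_C_mul,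
    coeff_prod_X_sub_C_eq_esymmSet S hj] at hcoeff
  simpa [leadingCoeff_ne_zero.2 hf] using hcoeff

end Polynomial

section Codeword

variable {F : Type*} [Field F] {n : ℕ}

def extEncode (k : ℕ) (a v : Fin n → F) (f : F[X]) : Fin (n + 1) → F :=
  Fin.snoc (fun i ↦ v i * f.eval (a i)) (f.coeff k)

theorem mem_GRSsubExt_iff {k r : ℕ} {a v : Fin n → F} {c : Fin (n + 1) → F} :
    c ∈ GRSsubExt n k r a v ↔
      ∃ f : F[X], f.natDegree ≤ k ∧ f.coeff (k - r) = 0 ∧ extEncode k a v f = c := by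
  constructor
  · rintro ⟨f, hdeg, hcoeff, hinit, hlast⟩
    refine ⟨f, hdeg, hcoeff, funext fun j ↦ ?_⟩
    cases j using Fin.lastCases <;> simp [extEncode, hinit, hlast]
  · rintro ⟨f, hdeg, hcoeff, rfl⟩
    exact ⟨f, hdeg, hcoeff, by simp [extEncode]⟩

theorem extEncode_zero (k : ℕ) (a v : Fin n → F) : extEncode k a v 0 = 0 := by
  ext j
  cases j using Fin.lastCases <;> simp [extEncode]

variable [DecidableEq F]

theorem wt_zero {m : ℕ} : wt (0 : Fin m → F) = 0 := by
  simp [wt]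

theorem wt_snoc (c : Fin n → F) (x : F) :
    wt (Fin.snoc c x : Fin (n + 1) → F) = wt c + if x = 0 then 0 else 1 := by
  simp only [wt, card_filter, Fin.sum_univ_castSucc, Fin.snoc_castSucc, Fin.snoc_last, ne_eq,
    ite_not]

theorem wt_eval_add_card_filter_isRoot {a v : Fin n → F} (ha : Function.Injective a)
    (hv : ∀ i, v i ≠ 0) (f : F[X]) :
    wt (fun i ↦ v i * f.eval (a i)) + #((univ.image a).filter f.IsRoot) = n := by
  have hroots : #((univ.image a).filter f.IsRoot) = #(univ.filter fun i ↦ f.IsRoot (a i)) := by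
    rw [filter_image, card_image_of_injective _ ha]
  have hwt : wt (fun i ↦ v i * f.eval (a i)) = #(univ.filter fun i ↦ ¬f.IsRoot (a i)) := by
    simp only [wt, ne_eq, mul_eq_zero, hv, false_or, IsRoot.def]
  rw [hwt, hroots, add_comm, card_filter_add_card_filter_not, card_univ, Fintype.card_fin]

theorem wt_extEncode_add_card_filter_isRoot {k : ℕ} {a v : Fin n → F}
    (ha : Function.Injective a) (hv : ∀ i, v i ≠ 0) (f : F[X]) :
    wt (extEncode k a v f) + #((univ.image a).filter f.IsRoot) =
      n + if f.coeff k = 0 then 0 else 1 := by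
  have := wt_eval_add_card_filter_isRoot ha hv f
  rw [extEncode, wt_snoc]
  split_ifs <;> omega

theorem le_wt_extEncode_add {k : ℕ} {a v : Fin n → F} (ha : Function.Injective a)
    (hv : ∀ i, v i ≠ 0) {f : F[X]} (hf : f ≠ 0) (hdeg : f.natDegree ≤ k) :
    n + 1 ≤ wt (extEncode k a v f) + k := by
  have hw := wt_extEncode_add_card_filter_isRoot (k := k) ha hv f
  have hroots := card_filter_isRoot_le_natDegree hf (univ.image a)
  split_ifs at hw with hk
  · have := natDegree_lt_of_coeff_eq_zero hf hdeg hk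
    omega
  · omega

theorem exists_esymmSet_eq_zero_of_wt_le {k j : ℕ} {a v : Fin n → F}
    (ha : Function.Injective a) (hv : ∀ i, v i ≠ 0) {f : F[X]} (hf : f ≠ 0)
    (hdeg : f.natDegree ≤ k) (hj : j < k) (hcoeff : f.coeff j = 0)
    (hwt : wt (extEncode k a v f) + k ≤ n + 1) :
    ∃ Z ⊆ univ.image a, (#Z = k - 1 ∨ #Z = k) ∧ esymmSet Z (#Z - j) = 0 := by
  set Z := (univ.image a).filter f.IsRoot
  have hw : wt (extEncode k a v f) + #Z = _ := wt_extEncode_add_card_filter_isRoot ha hv f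
  have hroots : #Z ≤ f.natDegree := card_filter_isRoot_le_natDegree hf _
  have hZ : f.natDegree ≤ #Z ∧ (#Z = k - 1 ∨ #Z = k) := by
    split_ifs at hw with hk
    · have := natDegree_lt_of_coeff_eq_zero hf hdeg hk
      omega
    · omega
  exact ⟨Z, filter_subset _ _, hZ.2, esymmSet_eq_zero_of_coeff_eq_zero hf (S := Z)
    (fun z hz ↦ (mem_filter.1 hz).2) hZ.1 (by omega) hcoeff⟩

theorem exists_mem_GRSsubExt_wt_of_esymmSet_eq_zero {k r : ℕ} {a v : Fin n → F}
    (ha : Function.Injective a) (hv : ∀ i, v i ≠ 0) {Z : Finset F} (hZa : Z ⊆ univ.image a)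
    (hZk : #Z = k - 1 ∨ #Z = k) (hkn : k ≤ n) (hrZ : k - r ≤ #Z)
    (hes : esymmSet Z (#Z - (k - r)) = 0) :
    ∃ c ∈ GRSsubExt n k r a v, c ≠ 0 ∧ wt c = n - k + 1 := by
  set f : F[X] := ∏ z ∈ Z, (X - C z)
  have hdeg : f.natDegree = #Z := natDegree_finsetProd_X_sub_C_eq_card Z id
  have hroots : (univ.image a).filter f.IsRoot = Z := by
    ext x
    simp only [f, mem_filter, IsRoot, eval_prod, eval_sub, eval_X, eval_C, prod_eq_zero_iff,
      sub_eq_zero, exists_eq_right']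
    exact ⟨And.right, fun hx ↦ ⟨hZa hx, hx⟩⟩
  have hcoeff : f.coeff (k - r) = 0 := by
    rw [coeff_prod_X_sub_C_eq_esymmSet Z hrZ, hes, mul_zero]
  have hw := wt_extEncode_add_card_filter_isRoot (k := k) ha hv f
  rw [hroots] at hw
  have hwt : wt (extEncode k a v f) = n - k + 1 := by
    rcases (show #Z < k ∨ #Z = k by omega) with hlt | heq
    · rw [coeff_eq_zero_of_natDegree_lt (hdeg ▸ hlt), if_pos rfl] at hw
      omega
    · have hlead : f.coeff k = 1 := by
        rw [← heq, ← hdeg]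
        exact (monic_prod_of_monic _ _ fun z _ ↦ monic_X_sub_C z).coeff_natDegree
      rw [hlead, if_neg one_ne_zero] at hw
      omega
  refine ⟨extEncode k a v f, mem_GRSsubExt_iff.2 ⟨f, by omega, hcoeff, rfl⟩, ?_, hwt⟩
  intro h
  rw [h, wt_zero] at hwt
  omega

end Codeword

theorem GRSsubExt_min_dist_general {F : Type*} [Field F] [DecidableEq F] {n k r : ℕ}
    (hk2 : k ≤ n - 1) (hr1 : 1 ≤ r) (hr2 : r ≤ k - 1)
    (a v : Fin n → F) (ha : Function.Injective a) (hv : ∀ i, v i ≠ 0) :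
    (∀ c ∈ GRSsubExt n k r a v, c ≠ 0 → n - k + 1 ≤ wt c) ∧
      ((∃ c ∈ GRSsubExt n k r a v, c ≠ 0 ∧ wt c < n - k + 2) ↔
        ((∃ Z ⊆ Finset.univ.image a, Z.card = k - 1 ∧ esymmSet Z (r - 1) = 0) ∨
          (∃ Z ⊆ Finset.univ.image a, Z.card = k ∧ esymmSet Z r = 0))) := by
  refine ⟨?_, ?_, ?_⟩
  · intro c hc hc0
    obtain ⟨f, hdeg, -, rfl⟩ := mem_GRSsubExt_iff.1 hc
    have hf : f ≠ 0 := by rintro rfl; exact hc0 (extEncode_zero k a v)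
    have := le_wt_extEncode_add ha hv hf hdeg
    omega
  · rintro ⟨c, hc, hc0, hwt⟩
    obtain ⟨f, hdeg, hcoeff, rfl⟩ := mem_GRSsubExt_iff.1 hc
    have hf : f ≠ 0 := by rintro rfl; exact hc0 (extEncode_zero k a v)
    obtain ⟨Z, hZa, hZk | hZk, hes⟩ :=
      exists_esymmSet_eq_zero_of_wt_le ha hv hf hdeg (by omega) hcoeff (by omega)
    · exact Or.inl ⟨Z, hZa, hZk, by rwa [hZk, show k - 1 - (k - r) = r - 1 by omega] at hes⟩
    · exact Or.inr ⟨Z, hZa, hZk, by rwa [hZk, show k - (k - r) = r by omega] at hes⟩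
  · rintro (⟨Z, hZa, hZk, hes⟩ | ⟨Z, hZa, hZk, hes⟩)
    · obtain ⟨c, hc, hc0, hwt⟩ := exists_mem_GRSsubExt_wt_of_esymmSet_eq_zero (k := k) (r := r)
        ha hv hZa (.inl hZk) (by omega) (by omega)
        (by rwa [hZk, show k - 1 - (k - r) = r - 1 by omega])
      exact ⟨c, hc, hc0, by omega⟩
    · obtain ⟨c, hc, hc0, hwt⟩ := exists_mem_GRSsubExt_wt_of_esymmSet_eq_zero (k := k) (r := r)
        ha hv hZa (.inr hZk) (by omega) (by omega)
        (by rwa [hZk, show k - (k - r) = r by omega])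
      exact ⟨c, hc, hc0, by omega⟩

theorem GRSsubExt_min_dist {F : Type*} [Field F] [Fintype F] [DecidableEq F] {n k r : ℕ}
    (hk1 : 1 ≤ k) (hk2 : k ≤ n - 1) (hr1 : 1 ≤ r) (hr2 : r ≤ k - 1)
    (a v : Fin n → F) (ha : Function.Injective a) (hv : ∀ i, v i ≠ 0) :
    (∀ c ∈ GRSsubExt n k r a v, c ≠ 0 → n - k + 1 ≤ wt c) ∧
      ((∃ c ∈ GRSsubExt n k r a v, c ≠ 0 ∧ wt c < n - k + 2) ↔
        ((∃ Z ⊆ Finset.univ.image a, Z.card = k - 1 ∧ esymmSet Z (r - 1) = 0) ∨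
          (∃ Z ⊆ Finset.univ.image a, Z.card = k ∧ esymmSet Z r = 0))) :=
  GRSsubExt_min_dist_general hk2 hr1 hr2 a v ha hv
end

section
/- Let a_1,...,a_n ∈ F_q be pairwise distinct and 2 ≤ r ≤ k-1, k ≤ n-1. The minimum distance d⊥ of the dual code of GRS_{k,r}(a) satisfies d⊥ ≥ k if and only if for every (k-1)-subset A of {a_1,...,a_n}, the values s_{k-1,r-1}(A) and s_{k-1,r}(A) are not both zero. -/
/-! A word `w` is dual to `GRS_{k,r}(a)` iff `∑ wᵢ f(aᵢ) = λ · [x^{k-r}] f` for every `f` of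
degree `≤ k`, where `λ = ∑ wᵢ aᵢ^{k-r}`. For a nonzero dual word of weight `< k` we have `λ ≠ 0`,
because the Reed–Solomon code of all polynomials of degree `≤ k` has dual distance `k + 2`.
Testing such a word against the nodal polynomial `N` of a `(k-1)`-set `A` containing its support,
and against `X N`, kills the coefficients of `x^{k-r}` and `x^{k-r-1}` in `N`, which by Vieta are
`± s_{k-1,r-1}(A)` and `± s_{k-1,r}(A)`. Conversely, if these coefficients vanish, then reducing a
polynomial of degree `≤ k` modulo `N` does not change its coefficient of `x^{k-r}`; so
`wᵢ = [x^{k-r}] ℓᵢ`, for the Lagrange basis `ℓᵢ` on `A`, is a nonzero dual word supported on `A`. -/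

open Finset Polynomial

/-- The subcode `GRS_{k,r}(a)` (all-ones factors). -/
def GRSsub1 {F : Type*} [Field F] (n k r : ℕ) (a : Fin n → F) : Set (Fin n → F) :=
  {c | ∃ f : F[X], f.natDegree ≤ k ∧ f.coeff (k - r) = 0 ∧ ∀ i, c i = f.eval (a i)}

open Lagrange

theorem Polynomial.coeff_mul_add_one_eq_zero_of_natDegree_le_one {R : Type*} [CommSemiring R]
    {p q : R[X]} {m : ℕ} (hm : p.coeff m = 0) (hm1 : p.coeff (m + 1) = 0)
    (hq : q.natDegree ≤ 1) : (p * q).coeff (m + 1) = 0 := by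
  rw [eq_X_add_C_of_natDegree_le_one hq, mul_add, ← mul_assoc, coeff_add, coeff_mul_C,
    coeff_mul_X, coeff_mul_C, hm, hm1, zero_mul, zero_mul, add_zero]

theorem Polynomial.coeff_modByMonic_of_coeff_eq_zero {R : Type*} [CommRing R] {p q : R[X]}
    (hq : q.Monic) (hdeg : p.natDegree ≤ q.natDegree + 1) {m : ℕ} (hm : q.coeff m = 0)
    (hm1 : q.coeff (m + 1) = 0) : (p %ₘ q).coeff (m + 1) = p.coeff (m + 1) := by
  conv_rhs => rw [← modByMonic_add_div p q]
  rw [coeff_add, coeff_mul_add_one_eq_zero_of_natDegree_le_one hm hm1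
    (by rw [natDegree_divByMonic p hq]; omega), add_zero]

section

variable {F : Type*} [Field F]

theorem Lagrange.coeff_nodal_card_sub [DecidableEq F] {ι : Type*} {s : Finset ι} {v : ι → F}
    (hvs : Set.InjOn v s) {d : ℕ} (hd : d ≤ s.card) :
    (nodal s v).coeff (s.card - d) = (-1) ^ d * esymmSet (s.image v) d := by
  have hcard : (s.image v).card = s.card := card_image_of_injOn hvs
  have h := Multiset.prod_X_sub_C_coeff (s.image v).val (k := s.card - d)
    (by simp only [card_val, hcard, Nat.sub_le])
  rw [card_val, hcard, Nat.sub_sub_self hd, ← prod_eq_multiset_prod,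
    prod_image (f := fun α => X - C α) hvs] at h
  rw [nodal_eq, h, esymmSet, ← Finset.esymm_map_val, Multiset.map_id']

theorem Lagrange.esymmSet_image_eq_zero_iff [DecidableEq F] {ι : Type*} {s : Finset ι}
    {v : ι → F} (hvs : Set.InjOn v s) {d : ℕ} (hd : d ≤ s.card) :
    esymmSet (s.image v) d = 0 ↔ (nodal s v).coeff (s.card - d) = 0 := by
  simp [coeff_nodal_card_sub hvs hd]

theorem Lagrange.coeff_modByMonic_nodal {ι : Type*} [DecidableEq ι] {s : Finset ι} {v : ι → F}
    (hvs : Set.InjOn v s) (f : F[X]) (m : ℕ) :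
    (f %ₘ nodal s v).coeff m = ∑ i ∈ s, f.eval (v i) * (Lagrange.basis s v i).coeff m := by
  rw [eq_interpolate_of_eval_eq (r := fun i => f.eval (v i)) hvs
    (by rw [← degree_nodal (v := v)]; exact degree_modByMonic_lt _ nodal_monic)
    (fun i hi => eval₂_modByMonic_eq_self_of_root (eval_nodal_at_node hi)),
    interpolate_apply, finsetSum_coeff]
  simp only [coeff_C_mul]

variable {n k r : ℕ} {a : Fin n → F} {w : Fin n → F}

theorem mem_dualCode_GRSsub1_iff :
    w ∈ dualCode (GRSsub1 n k r a) ↔ ∀ f : F[X], f.natDegree ≤ k →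
      ∑ i, w i * f.eval (a i) = (∑ i, w i * a i ^ (k - r)) * f.coeff (k - r) := by
  constructor
  · intro hw f hf
    set g := f - C (f.coeff (k - r)) * X ^ (k - r)
    have hg : g.natDegree ≤ k :=
      (natDegree_sub_le _ _).trans (max_le hf (natDegree_C_mul_X_pow_le _ _ |>.trans (by omega)))
    have hg0 : g.coeff (k - r) = 0 := by simp [g]
    have h := hw _ ⟨g, hg, hg0, fun _ => rfl⟩
    simp only [g, eval_sub, eval_mul, eval_C, eval_pow, eval_X, mul_sub, sum_sub_distrib,
      sub_eq_zero] at h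
    rw [h, sum_mul]
    exact sum_congr rfl fun i _ => by ring
  · rintro h c ⟨f, hf, hf0, hc⟩
    simp only [hc, h f hf, hf0, mul_zero]

theorem eq_zero_of_forall_sum_mul_eval_eq_zero [DecidableEq F] (ha : Function.Injective a)
    (hwt : wt w ≤ k + 1)
    (h : ∀ f : F[X], f.natDegree ≤ k → ∑ i, w i * f.eval (a i) = 0) : w = 0 := by
  set s := univ.filter fun i => w i ≠ 0
  have hs : s.card ≤ k + 1 := hwt
  funext i
  by_contra hi
  have his : i ∈ s := by simpa [s] using hi
  have hsum := h (Lagrange.basis s a i)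
    (by rw [natDegree_basis ha.injOn his]; omega)
  rw [sum_eq_single i ?_ (by simp), eval_basis_self ha.injOn his, mul_one] at hsum
  · exact hi hsum
  · intro j _ hji
    by_cases hj : w j = 0
    · rw [hj, zero_mul]
    · rw [eval_basis_of_ne hji.symm (by simpa [s] using hj), mul_zero]

theorem coeff_eq_zero_of_mem_dualCode [DecidableEq F] (ha : Function.Injective a)
    (hw : w ∈ dualCode (GRSsub1 n k r a)) (hw0 : w ≠ 0) (hwt : wt w ≤ k + 1) {f : F[X]}
    (hf : f.natDegree ≤ k) (hfw : ∀ i, w i ≠ 0 → f.eval (a i) = 0) : f.coeff (k - r) = 0 := by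
  rw [mem_dualCode_GRSsub1_iff] at hw
  have hlam : ∑ i, w i * a i ^ (k - r) ≠ 0 := fun h0 =>
    hw0 (eq_zero_of_forall_sum_mul_eval_eq_zero ha hwt fun g hg => by rw [hw g hg, h0, zero_mul])
  have hsum : ∑ i, w i * f.eval (a i) = 0 := sum_eq_zero fun i _ => by
    by_cases hi : w i = 0
    · rw [hi, zero_mul]
    · rw [hfw i hi, mul_zero]
  rw [hw f hf] at hsum
  exact (mul_eq_zero.mp hsum).resolve_left hlam

theorem exists_coeff_nodal_eq_zero_of_mem_dualCode [DecidableEq F] (ha : Function.Injective a)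
    (hk : k ≤ n + 1) {m : ℕ} (hm : k - r = m + 1) (hw : w ∈ dualCode (GRSsub1 n k r a))
    (hw0 : w ≠ 0) (hwt : wt w < k) :
    ∃ S : Finset (Fin n), S.card = k - 1 ∧ (nodal S a).coeff (m + 1) = 0 ∧
      (nodal S a).coeff m = 0 := by
  obtain ⟨S, hsupp, hS⟩ := exists_superset_card_eq (s := univ.filter fun i => w i ≠ 0)
    (n := k - 1) (by unfold wt at hwt; omega) (by rw [Fintype.card_fin]; omega)
  have hroot : ∀ i, w i ≠ 0 → (nodal S a).eval (a i) = 0 := fun i hi =>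
    eval_nodal_at_node (hsupp (by simpa using hi))
  refine ⟨S, hS, ?_, ?_⟩
  · rw [← hm]
    exact coeff_eq_zero_of_mem_dualCode ha hw hw0 (by omega)
      (by rw [natDegree_nodal]; omega) hroot
  · rw [← coeff_mul_X, ← hm]
    exact coeff_eq_zero_of_mem_dualCode ha hw hw0 (by omega)
      (by rw [natDegree_mul_X nodal_ne_zero, natDegree_nodal]; omega)
      fun i hi => by rw [eval_mul, hroot i hi, zero_mul]

theorem exists_mem_dualCode_of_coeff_nodal_eq_zero [DecidableEq F] (ha : Function.Injective a)
    {S : Finset (Fin n)} (hk : k ≤ S.card + 1) {m : ℕ} (hm : k - r = m + 1)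
    (h1 : (nodal S a).coeff (m + 1) = 0) (h0 : (nodal S a).coeff m = 0) :
    ∃ w ∈ dualCode (GRSsub1 n k r a), w ≠ 0 ∧ wt w ≤ S.card := by
  set w : Fin n → F := fun i => if i ∈ S then (Lagrange.basis S a i).coeff (k - r) else 0
  have hw : ∀ f : F[X], f.natDegree ≤ k → ∑ i, w i * f.eval (a i) = f.coeff (k - r) := by
    intro f hf
    calc ∑ i, w i * f.eval (a i)
        = ∑ i ∈ S, f.eval (a i) * (Lagrange.basis S a i).coeff (k - r) := by
          simp only [w, ite_mul, zero_mul, sum_ite_mem, univ_inter, mul_comm]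
      _ = (f %ₘ nodal S a).coeff (k - r) := (coeff_modByMonic_nodal ha.injOn f _).symm
      _ = f.coeff (k - r) := by
          rw [hm, coeff_modByMonic_of_coeff_eq_zero nodal_monic (by rw [natDegree_nodal]; omega)
            h0 h1]
  have hX : ∑ i, w i * a i ^ (k - r) = 1 := by
    simpa using hw (X ^ (k - r)) (by rw [natDegree_X_pow]; omega)
  refine ⟨w, fun c ⟨f, hf, hf0, hc⟩ => by simp only [hc, hw f hf, hf0], ?_, ?_⟩
  · intro h0
    simp [h0] at hX
  · refine card_le_card fun i hi => ?_
    by_contra hiS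
    simp [w, hiS] at hi

end

theorem dual_dist_ge_iff_general {F : Type*} [Field F] [DecidableEq F] {n k r : ℕ}
    (hr1 : 2 ≤ r) (hr2 : r ≤ k - 1) (hk : k ≤ n - 1)
    (a : Fin n → F) (ha : Function.Injective a) :
    (∀ w ∈ dualCode (GRSsub1 n k r a), w ≠ 0 → k ≤ wt w) ↔
      ∀ A ⊆ Finset.univ.image a, A.card = k - 1 →
        ¬(esymmSet A (r - 1) = 0 ∧ esymmSet A r = 0) := by
  obtain ⟨m, hm⟩ : ∃ m, k - r = m + 1 := ⟨k - r - 1, by omega⟩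
  have esymm_iff (S : Finset (Fin n)) (hS : S.card = k - 1) :
      (esymmSet (S.image a) (r - 1) = 0 ∧ esymmSet (S.image a) r = 0) ↔
        ((nodal S a).coeff (m + 1) = 0 ∧ (nodal S a).coeff m = 0) := by
    rw [esymmSet_image_eq_zero_iff ha.injOn (by omega), esymmSet_image_eq_zero_iff ha.injOn
      (by omega), hS, show k - 1 - (r - 1) = m + 1 by omega, show k - 1 - r = m by omega]
  constructor
  · rintro hdist A hA hcard hA0
    obtain ⟨S, -, rfl⟩ := subset_image_iff.mp hA
    rw [card_image_of_injective _ ha] at hcard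
    obtain ⟨h1, h0⟩ := (esymm_iff S hcard).mp hA0
    obtain ⟨w, hw, hw0, hwt⟩ := exists_mem_dualCode_of_coeff_nodal_eq_zero ha (by omega) hm h1 h0
    have := hdist w hw hw0
    omega
  · intro hA w hw hw0
    by_contra! hwt
    obtain ⟨S, hS, h1, h0⟩ :=
      exists_coeff_nodal_eq_zero_of_mem_dualCode ha (by omega) hm hw hw0 hwt
    exact hA _ (image_subset_image (subset_univ S)) (by rw [card_image_of_injective _ ha, hS])
      ((esymm_iff S hS).mpr ⟨h1, h0⟩)

theorem dual_dist_ge_iff {F : Type*} [Field F] [Fintype F] [DecidableEq F] {n k r : ℕ}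
    (hr1 : 2 ≤ r) (hr2 : r ≤ k - 1) (hk : k ≤ n - 1)
    (a : Fin n → F) (ha : Function.Injective a) :
    (∀ w ∈ dualCode (GRSsub1 n k r a), w ≠ 0 → k ≤ wt w) ↔
      ∀ A ⊆ Finset.univ.image a, A.card = k - 1 →
        ¬(esymmSet A (r - 1) = 0 ∧ esymmSet A r = 0) :=
  dual_dist_ge_iff_general hr1 hr2 hk a ha
end

section
/- Let 2 ≤ k ≤ n-2, a_1,...,a_n ∈ F_q pairwise distinct, u_i = ∏_{j≠i}(a_j - a_i)^{-1}, and suppose ∑_i a_i = 0. Then the dual code of GRS_{k,1}(a) (with all-ones factors) equals GRS_{n-k,1}(a, u), i.e., the code {(u_1 g(a_1),...,u_n g(a_n)) : g ∈ F_q[x], deg g ≤ n-k, coefficient of x^{n-k-1} equals 0}. -/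
open Finset Polynomial

/-!
Up to the sign `(-1) ^ (n - 1)`, `u` is the vector of Lagrange weights
`w i = ∏ j ≠ i, (a i - a j)⁻¹`, and rescaling the column multipliers does not change a GRS code.
For `deg P ≤ n` one has `∑ i, w i * P (a i) = P[n-1] + P[n] * ∑ i, a i` (reduce `P` modulo the
monic nodal polynomial and read off the leading coefficient of the interpolant), which is
`P[n-1]` because `∑ i, a i = 0`. So a codeword of each code pairs to `(f * g)[n-1]`, and this
vanishes since `deg f ≤ k`, `deg g ≤ n - k` and the gaps sit at `k - 1` and `n - k - 1`.
Conversely a dual word is `w * g(a)` for the interpolant `g` of degree `< n`; pairing it with the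
monomials `X ^ j`, `j ≤ k`, `j ≠ k - 1`, kills the coefficients of `g` from the top down.
-/

namespace Lagrange

variable {F ι : Type*} [Field F] [DecidableEq ι] {s : Finset ι} {v : ι → F}

theorem prod_sub_inv_eq_neg_one_pow_mul_nodalWeight {i : ι} (hi : i ∈ s) :
    ∏ j ∈ s.erase i, (v j - v i)⁻¹ = (-1) ^ (#s - 1) * nodalWeight s v i := by
  have hneg : ∀ j ∈ s.erase i, (v j - v i)⁻¹ = -1 * (v i - v j)⁻¹ := fun j _ => by
    rw [← neg_sub, inv_neg, neg_one_mul]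
  rw [prod_congr rfl hneg, prod_mul_distrib, prod_const, card_erase_of_mem hi, nodalWeight]

theorem sum_nodalWeight_mul_eval_of_natDegree_le (hvs : Set.InjOn v s) (hs : 0 < #s)
    {P : F[X]} (hP : P.natDegree ≤ #s) :
    ∑ i ∈ s, nodalWeight s v i * P.eval (v i) = P.coeff (#s - 1) + P.coeff #s * ∑ i ∈ s, v i := by
  set R := P - C (P.coeff #s) * nodal s v
  have hnodal_top : (nodal s v).coeff #s = 1 := by
    simpa [natDegree_nodal] using (nodal_monic (s := s) (v := v)).coeff_natDegree
  have hR : R.degree < #s := by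
    refine (degree_lt_iff_coeff_zero R #s).2 fun m hm => ?_
    rcases hm.eq_or_lt with rfl | hm
    · simp [R, hnodal_top]
    · have hPm : P.coeff m = 0 := coeff_eq_zero_of_natDegree_lt (hP.trans_lt hm)
      have hnodal_m : (nodal s v).coeff m = 0 :=
        coeff_eq_zero_of_natDegree_lt (by rwa [natDegree_nodal])
      simp [R, hPm, hnodal_m]
  have hReval : ∀ i ∈ s, R.eval (v i) = P.eval (v i) := fun i hi => by
    simp [R, eval_nodal_at_node hi]
  have hRcoeff : R.coeff (#s - 1) = P.coeff (#s - 1) + P.coeff #s * ∑ i ∈ s, v i := by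
    rw [coeff_sub, coeff_C_mul, nodal_eq, prod_X_sub_C_coeff_card_pred s v hs]
    ring
  rw [← hRcoeff, coeff_eq_sum hvs hR]
  refine sum_congr rfl fun i hi => ?_
  rw [hReval i hi, nodalWeight, prod_inv_distrib, div_eq_mul_inv, mul_comm]

end Lagrange

namespace Polynomial

variable {R : Type*} [Semiring R]

theorem coeff_mul_add_sub_one_eq_zero {f g : R[X]} {k m : ℕ}
    (hf : f.natDegree ≤ k) (hf' : f.coeff (k - 1) = 0)
    (hg : g.natDegree ≤ m) (hg' : g.coeff (m - 1) = 0) :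
    (f * g).coeff (k + m - 1) = 0 := by
  rw [coeff_mul]
  refine sum_eq_zero fun ⟨p, q⟩ hpq => ?_
  rw [HasAntidiagonal.mem_antidiagonal] at hpq
  by_cases hp : p = k - 1
  · rw [hp, hf', zero_mul]
  by_cases hq : q = m - 1
  · rw [hq, hg', mul_zero]
  by_cases hpk : k < p
  · rw [coeff_eq_zero_of_natDegree_lt (hf.trans_lt hpk), zero_mul]
  · rw [coeff_eq_zero_of_natDegree_lt (hg.trans_lt (by omega)), mul_zero]

theorem natDegree_le_and_coeff_eq_zero_of_coeff_mul_X_pow {g : R[X]} {n k : ℕ}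
    (hk : 1 ≤ k) (hkn : k < n) (hg : g.natDegree ≤ n - 1)
    (h : ∀ j ≤ k, j ≠ k - 1 → (g * X ^ j).natDegree ≤ n → (g * X ^ j).coeff (n - 1) = 0) :
    g.natDegree ≤ n - k ∧ g.coeff (n - k - 1) = 0 := by
  have hdeg_mul {j d : ℕ} (hd : g.natDegree ≤ d) : (g * X ^ j).natDegree ≤ d + j :=
    natDegree_mul_le.trans (add_le_add hd (natDegree_X_pow_le j))
  have hcoeff {j : ℕ} (hj : j ≤ k) (hj' : j ≠ k - 1) (hd : g.natDegree ≤ n - j) :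
      g.coeff (n - 1 - j) = 0 := by
    have := h j hj hj' ((hdeg_mul hd).trans (by omega))
    rwa [coeff_mul_X_pow', if_pos (by omega)] at this
  -- Each vanishing coefficient lowers the degree bound, which makes the next moment available.
  have hdesc : ∀ j ≤ k - 1, g.natDegree ≤ n - 1 - j := by
    intro j
    induction j with
    | zero => exact fun _ => hg
    | succ j ih =>
      intro hj
      have hd := ih (by omega)
      exact (natDegree_le_pred hd (hcoeff (by omega) (by omega) (by omega))).trans_eq (by omega)
  have hd : g.natDegree ≤ n - k := (hdesc (k - 1) le_rfl).trans_eq (by omega)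
  have hcoeff_k := hcoeff le_rfl (by omega) hd
  exact ⟨hd, by rwa [Nat.sub_right_comm] at hcoeff_k⟩

end Polynomial

section GRS

variable {F : Type*} [Field F] {n : ℕ}

theorem GRSsub_const_mul {m r : ℕ} (a v : Fin n → F) {c : F} (hc : c ≠ 0) :
    GRSsub n m r a (fun i => c * v i) = GRSsub n m r a v := by
  ext y
  constructor
  · rintro ⟨f, hf, hf', hy⟩
    refine ⟨C c * f, (natDegree_C_mul_le c f).trans hf, by rw [coeff_C_mul, hf', mul_zero],
      fun i => ?_⟩
    rw [hy i, eval_mul, eval_C]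
    ring
  · rintro ⟨f, hf, hf', hy⟩
    refine ⟨C c⁻¹ * f, (natDegree_C_mul_le _ f).trans hf, by rw [coeff_C_mul, hf', mul_zero],
      fun i => ?_⟩
    rw [hy i, eval_mul, eval_C, mul_mul_mul_comm, mul_inv_cancel₀ hc, one_mul]

variable {a : Fin n → F}

theorem sum_nodalWeight_mul_eval_of_sum_eq_zero (ha : Function.Injective a)
    (ht : ∑ i, a i = 0) (hn : 0 < n) {P : F[X]} (hP : P.natDegree ≤ n) :
    ∑ i, Lagrange.nodalWeight univ a i * P.eval (a i) = P.coeff (n - 1) := by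
  have := Lagrange.sum_nodalWeight_mul_eval_of_natDegree_le (s := univ) ha.injOn
    (by rwa [card_fin]) (by rwa [card_fin])
  rwa [card_fin, ht, mul_zero, add_zero] at this

theorem GRSsub_nodalWeight_subset_dualCode (ha : Function.Injective a)
    (ht : ∑ i, a i = 0) (hn : 0 < n) {k : ℕ} (hkn : k ≤ n) :
    GRSsub n (n - k) 1 a (Lagrange.nodalWeight univ a) ⊆ dualCode (GRSsub n k 1 a fun _ => 1) := by
  rintro y ⟨g, hg, hg', hy⟩ c ⟨f, hf, hf', hc⟩
  have hfg : (f * g).natDegree ≤ n := natDegree_mul_le.trans (by omega)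
  calc ∑ i, y i * c i = ∑ i, Lagrange.nodalWeight univ a i * (f * g).eval (a i) :=
        sum_congr rfl fun i _ => by rw [hy i, hc i, eval_mul]; ring
    _ = (f * g).coeff (k + (n - k) - 1) := by
        rw [sum_nodalWeight_mul_eval_of_sum_eq_zero ha ht hn hfg, Nat.add_sub_cancel' hkn]
    _ = 0 := coeff_mul_add_sub_one_eq_zero hf hf' hg hg'

theorem dualCode_subset_GRSsub_nodalWeight (ha : Function.Injective a)
    (ht : ∑ i, a i = 0) {k : ℕ} (hk : 1 ≤ k) (hkn : k < n) :
    dualCode (GRSsub n k 1 a fun _ => 1) ⊆ GRSsub n (n - k) 1 a (Lagrange.nodalWeight univ a) := by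
  intro y hy
  have hw (i : Fin n) : Lagrange.nodalWeight univ a i ≠ 0 :=
    Lagrange.nodalWeight_ne_zero ha.injOn (mem_univ i)
  set g := Lagrange.interpolate univ a fun i => y i / Lagrange.nodalWeight univ a i
  have hgy (i : Fin n) : y i = Lagrange.nodalWeight univ a i * g.eval (a i) := by
    rw [Lagrange.eval_interpolate_at_node _ ha.injOn (mem_univ i), mul_div_cancel₀ _ (hw i)]
  have hg : g.natDegree ≤ n - 1 := by
    have := Lagrange.degree_interpolate_lt (s := univ)
      (r := fun i => y i / Lagrange.nodalWeight univ a i) ha.injOn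
    rw [card_fin] at this
    exact natDegree_le_pred (natDegree_le_of_degree_le this.le)
      (coeff_eq_zero_of_degree_lt this)
  have hmoments : ∀ j ≤ k, j ≠ k - 1 → (g * X ^ j).natDegree ≤ n →
      (g * X ^ j).coeff (n - 1) = 0 := by
    intro j hj hj' hdeg
    have hmem : (fun i => a i ^ j) ∈ GRSsub n k 1 a fun _ => 1 :=
      ⟨X ^ j, (natDegree_X_pow_le j).trans hj, by rw [coeff_X_pow, if_neg (Ne.symm hj')],
        fun i => by rw [eval_pow, eval_X, one_mul]⟩
    rw [← sum_nodalWeight_mul_eval_of_sum_eq_zero ha ht (by omega) hdeg, ← hy _ hmem]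
    exact sum_congr rfl fun i _ => by rw [hgy i, eval_mul, eval_pow, eval_X, mul_assoc]
  obtain ⟨hdeg, hcoeff⟩ := natDegree_le_and_coeff_eq_zero_of_coeff_mul_X_pow hk hkn hg hmoments
  exact ⟨g, hdeg, hcoeff, hgy⟩

end GRS

theorem dual_GRSsub_one_general {F : Type*} [Field F] {n k : ℕ}
    (hk1 : 2 ≤ k) (hk2 : k ≤ n - 2)
    (a : Fin n → F) (ha : Function.Injective a)
    (u : Fin n → F) (hu : ∀ i, u i = ∏ j ∈ univ.erase i, (a j - a i)⁻¹)
    (ht : ∑ i, a i = 0) :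
    dualCode (GRSsub n k 1 a (fun _ => 1)) = GRSsub n (n - k) 1 a u := by
  have hu' : u = fun i => (-1) ^ (n - 1) * Lagrange.nodalWeight univ a i := funext fun i => by
    rw [hu, Lagrange.prod_sub_inv_eq_neg_one_pow_mul_nodalWeight (mem_univ i), card_fin]
  rw [hu', GRSsub_const_mul _ _ (pow_ne_zero _ (neg_ne_zero.2 one_ne_zero))]
  exact (dualCode_subset_GRSsub_nodalWeight ha ht (by omega) (by omega)).antisymm
    (GRSsub_nodalWeight_subset_dualCode ha ht (by omega) (by omega))

theorem dual_GRSsub_one {F : Type*} [Field F] [Fintype F] {n k : ℕ}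
    (hk1 : 2 ≤ k) (hk2 : k ≤ n - 2)
    (a : Fin n → F) (ha : Function.Injective a)
    (u : Fin n → F) (hu : ∀ i, u i = ∏ j ∈ univ.erase i, (a j - a i)⁻¹)
    (ht : ∑ i, a i = 0) :
    dualCode (GRSsub n k 1 a (fun _ => 1)) = GRSsub n (n - k) 1 a u :=
  dual_GRSsub_one_general hk1 hk2 a ha u hu ht
end

section
/- Let 3 ≤ k ≤ n-2, a_1,...,a_n ∈ F_q pairwise distinct, u_i = ∏_{j≠i}(a_j - a_i)^{-1}, a^{(i)} the tuple deleting a_i, and suppose s_{n-1}(a_1,...,a_n) = 0. Then the dual code of GRS_{k,k-1}(a) equals GRS_{n-k,n-k-1}(a, w) where w_i = u_i s_{n-2}(a^{(i)}). -/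
/-!
Let `P = ∏ (X - a_i)` and let `L_i` be the Lagrange basis. The hypothesis `s_{n-1}(a) = 0` says
that `P` has no linear term, and `w_i = -[X¹] L_i`; hence `∑ w_i h(a_i) = -[X¹] (h mod P)` for
every polynomial `h`, which for `deg h ≤ n + 1` equals `h_{n+1} P_0 - h_1`. A product `g f` of
codeword polynomials has degree `≤ n` and no linear term, so the two codes are orthogonal.
Conversely, write a dual word as `w_i g(a_i)` with `deg g < n` (possible since `w_i ≠ 0`).
Testing it against `1` gives `g_1 = 0`, and testing against `X^p` for `p = 2, …, k` kills
`g_{n-1}, …, g_{n-k+1}` in turn, because `P_0 ≠ 0`: no `a_i` vanishes, as `P` has no linear term.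
-/

open Finset Polynomial

namespace Polynomial

variable {R : Type*} [CommRing R]

theorem coeff_one_modByMonic {P m : R[X]} (hP : P.Monic) (hP1 : P.coeff 1 = 0)
    (hm : m.natDegree ≤ P.natDegree + 1) :
    (m %ₘ P).coeff 1 = m.coeff 1 - m.coeff (P.natDegree + 1) * P.coeff 0 := by
  have hq : (m /ₘ P).natDegree ≤ 1 := by rw [natDegree_divByMonic m hP]; omega
  have hdecomp := modByMonic_add_div m P
  have htop : m.coeff (P.natDegree + 1) = (m /ₘ P).coeff 1 := by
    conv_lhs => rw [← hdecomp]
    rw [coeff_add, coeff_mul_add_eq_of_natDegree_le le_rfl hq, hP.coeff_natDegree, one_mul,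
      coeff_eq_zero_of_natDegree_lt (Nat.lt_succ_of_le (natDegree_modByMonic_le m hP)), zero_add]
  have hlow : m.coeff 1 = (m %ₘ P).coeff 1 + P.coeff 0 * (m /ₘ P).coeff 1 := by
    conv_lhs => rw [← hdecomp]
    simp [coeff_add, coeff_mul, Nat.antidiagonal_succ, hP1]
  rw [htop, hlow]
  ring

theorem natDegree_le_of_coeff_one_mul_X_pow_modByMonic_eq_zero [IsDomain R]
    {P g : R[X]} {k : ℕ} (hP : P.Monic) (hP1 : P.coeff 1 = 0) (hP0 : P.coeff 0 ≠ 0)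
    (hg : g.degree < P.degree) (h : ∀ p, 2 ≤ p → p ≤ k → ((g * X ^ p) %ₘ P).coeff 1 = 0) :
    g.natDegree ≤ P.natDegree - k := by
  set n := P.natDegree
  have hgn : g.natDegree ≤ n - 1 := by
    rcases eq_or_ne g 0 with rfl | hg0
    · simp
    · have := natDegree_lt_natDegree hg0 hg
      omega
  suffices ∀ p, 1 ≤ p → p ≤ k → g.natDegree ≤ n - p by
    rcases Nat.eq_zero_or_pos k with rfl | hk
    · exact hgn.trans (Nat.sub_le n 1)
    · exact this k hk le_rfl
  intro p hp
  induction p, hp using Nat.le_induction with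
  | base => exact fun _ => hgn
  | succ p hp ih =>
    intro hpk
    have hgp := ih (by omega)
    rcases le_or_gt n p with hnp | hpn
    · omega
    have hm : (g * X ^ (p + 1)).natDegree ≤ n + 1 :=
      natDegree_mul_le.trans (by rw [natDegree_X_pow]; omega)
    have hcoeff := h (p + 1) (by omega) hpk
    rw [coeff_one_modByMonic hP hP1 hm, coeff_mul_X_pow', if_neg (by omega),
      show n + 1 = (n - p) + (p + 1) by omega, coeff_mul_X_pow, zero_sub, neg_eq_zero] at hcoeff
    have := natDegree_le_pred hgp ((mul_eq_zero.mp hcoeff).resolve_right hP0)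
    omega

end Polynomial

namespace Lagrange

theorem coeff_nodal {R ι : Type*} [CommRing R] (s : Finset ι) (v : ι → R) {k : ℕ} (hk : k ≤ #s) :
    (nodal s v).coeff k = (-1) ^ (#s - k) * ∑ t ∈ s.powersetCard (#s - k), ∏ j ∈ t, v j := by
  have h := Multiset.prod_X_sub_C_coeff (s.val.map v) (k := k) (by simpa using hk)
  rwa [Multiset.map_map, Multiset.card_map, Finset.esymm_map_val] at h

variable {F ι : Type*} [Field F] [DecidableEq ι] {s : Finset ι} {v : ι → F} {i : ι}

theorem basis_eq_C_nodalWeight_mul_nodal_erase (hi : i ∈ s) :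
    Lagrange.basis s v i = C (nodalWeight s v i) * nodal (s.erase i) v := by
  rw [basis_eq_prod_sub_inv_mul_nodal_div hi, nodal_erase_eq_nodal_div hi]

theorem coeff_one_basis (hi : i ∈ s) (hs : 2 ≤ #s) :
    (Lagrange.basis s v i).coeff 1 = -((∏ j ∈ s.erase i, (v j - v i)⁻¹) *
      ∑ t ∈ (s.erase i).powersetCard (#s - 2), ∏ j ∈ t, v j) := by
  have hcard : #(s.erase i) = #s - 1 := card_erase_of_mem hi
  have hweight : nodalWeight s v i = (-1) ^ (#s - 1) * ∏ j ∈ s.erase i, (v j - v i)⁻¹ := by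
    rw [nodalWeight, ← hcard, ← prod_neg]
    exact prod_congr rfl fun j _ => by rw [← inv_neg, neg_sub]
  have hsign : (-1 : F) ^ (#s - 1) * (-1) ^ (#s - 2) = -1 := by
    rw [← pow_add]
    exact Odd.neg_one_pow ⟨#s - 2, by omega⟩
  rw [basis_eq_C_nodalWeight_mul_nodal_erase hi, coeff_C_mul, coeff_nodal _ _ (by omega), hcard,
    show #s - 1 - 1 = #s - 2 by omega, hweight]
  linear_combination (∏ j ∈ s.erase i, (v j - v i)⁻¹) *
    (∑ t ∈ (s.erase i).powersetCard (#s - 2), ∏ j ∈ t, v j) * hsign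

theorem sum_coeff_basis_mul_eval (hvs : Set.InjOn v s) (h : F[X]) (k : ℕ) :
    ∑ i ∈ s, (Lagrange.basis s v i).coeff k * h.eval (v i) = (h %ₘ nodal s v).coeff k := by
  have hinterp : h %ₘ nodal s v = interpolate s v fun i => h.eval (v i) := by
    refine eq_interpolate_of_eval_eq _ hvs ?_ fun i hi => ?_
    · rw [← degree_nodal (s := s) (v := v)]
      exact degree_modByMonic_lt h nodal_monic
    · conv_rhs => rw [← modByMonic_add_div h (nodal s v)]
      rw [eval_add, eval_mul, eval_nodal_at_node hi, zero_mul, add_zero]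
  rw [hinterp, interpolate_apply, finsetSum_coeff]
  exact sum_congr rfl fun i _ => by rw [coeff_C_mul, mul_comm]

theorem ne_zero_of_coeff_one_nodal_eq_zero (hvs : Set.InjOn v s) (h1 : (nodal s v).coeff 1 = 0)
    (hi : i ∈ s) : v i ≠ 0 := by
  intro hvi
  rw [nodal_eq_mul_nodal_erase hi, hvi, map_zero, sub_zero, coeff_X_mul,
    coeff_zero_eq_eval_zero, eval_nodal, prod_eq_zero_iff] at h1
  obtain ⟨j, hj, hj0⟩ := h1
  rw [zero_sub, neg_eq_zero, ← hvi] at hj0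
  exact (mem_erase.mp hj).1 (hvs (mem_erase.mp hj).2 hi hj0)

theorem coeff_zero_nodal_ne_zero (hvs : Set.InjOn v s) (h1 : (nodal s v).coeff 1 = 0) :
    (nodal s v).coeff 0 ≠ 0 := by
  rw [coeff_zero_eq_eval_zero, eval_nodal, prod_ne_zero_iff]
  exact fun i hi => by simpa using ne_zero_of_coeff_one_nodal_eq_zero hvs h1 hi

theorem coeff_one_nodal_erase_ne_zero (hvs : Set.InjOn v s) (h1 : (nodal s v).coeff 1 = 0)
    (hi : i ∈ s) : (nodal (s.erase i) v).coeff 1 ≠ 0 := by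
  intro hN1
  have h0 := coeff_zero_nodal_ne_zero hvs h1
  rw [nodal_eq_mul_nodal_erase hi, mul_comm] at h0 h1
  rw [coeff_mul_X_sub_C, hN1, zero_mul, sub_zero] at h1
  simp [mul_coeff_zero, h1] at h0

theorem coeff_one_basis_ne_zero (hvs : Set.InjOn v s) (h1 : (nodal s v).coeff 1 = 0)
    (hi : i ∈ s) : (Lagrange.basis s v i).coeff 1 ≠ 0 := by
  rw [basis_eq_C_nodalWeight_mul_nodal_erase hi, coeff_C_mul]
  exact mul_ne_zero (nodalWeight_ne_zero hvs hi) (coeff_one_nodal_erase_ne_zero hvs h1 hi)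

end Lagrange

section GRS

open Lagrange

variable {F : Type*} [Field F] {n k : ℕ} {a w : Fin n → F}

theorem sum_mul_eval_eq_neg_coeff_one_modByMonic (ha : Function.Injective a)
    (hw : ∀ i, w i = -(Lagrange.basis univ a i).coeff 1) (h : F[X]) :
    ∑ i, w i * h.eval (a i) = -(h %ₘ nodal univ a).coeff 1 := by
  rw [← sum_coeff_basis_mul_eval ha.injOn, ← sum_neg_distrib]
  exact sum_congr rfl fun i _ => by rw [hw, neg_mul]

theorem GRSsub_subset_dualCode (ha : Function.Injective a)
    (hw : ∀ i, w i = -(Lagrange.basis univ a i).coeff 1) (hP : (nodal univ a).coeff 1 = 0)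
    (hk : 1 ≤ k) (hkn : k < n) :
    GRSsub n (n - k) (n - k - 1) a w ⊆ dualCode (GRSsub n k (k - 1) a fun _ => 1) := by
  rintro x ⟨g, hg, hg1, hx⟩ c ⟨f, hf, hf1, hc⟩
  rw [show n - k - (n - k - 1) = 1 by omega] at hg1
  rw [show k - (k - 1) = 1 by omega] at hf1
  have hgf : (g * f).natDegree ≤ n := natDegree_mul_le.trans (by omega)
  have hgf1 : (g * f).coeff 1 = 0 := by
    simp [coeff_mul, Nat.antidiagonal_succ, hg1, hf1]
  have hgfn : (g * f).coeff (n + 1) = 0 := coeff_eq_zero_of_natDegree_lt (by omega)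
  calc ∑ i, x i * c i
      = ∑ i, w i * (g * f).eval (a i) := sum_congr rfl fun i _ => by rw [hx, hc, eval_mul]; ring
    _ = 0 := by
      rw [sum_mul_eval_eq_neg_coeff_one_modByMonic ha hw, coeff_one_modByMonic nodal_monic hP
        (by rw [natDegree_nodal, card_fin]; omega)]
      simp [natDegree_nodal, hgf1, hgfn]

theorem dualCode_subset_GRSsub (ha : Function.Injective a)
    (hw : ∀ i, w i = -(Lagrange.basis univ a i).coeff 1) (hP : (nodal univ a).coeff 1 = 0)
    (hk : 1 ≤ k) (hkn : k < n) :
    dualCode (GRSsub n k (k - 1) a fun _ => 1) ⊆ GRSsub n (n - k) (n - k - 1) a w := by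
  intro x hx
  have hw0 : ∀ i, w i ≠ 0 := fun i => by
    rw [hw, neg_ne_zero]; exact coeff_one_basis_ne_zero ha.injOn hP (mem_univ i)
  set g := interpolate univ a fun i => (w i)⁻¹ * x i
  have hxg : ∀ i, x i = w i * g.eval (a i) := fun i => by
    rw [eval_interpolate_at_node _ ha.injOn (mem_univ i), mul_inv_cancel_left₀ (hw0 i)]
  have hgP : g.degree < (nodal univ a).degree := by
    rw [degree_nodal]; exact degree_interpolate_lt _ ha.injOn
  have horth : ∀ p ≤ k, p ≠ 1 → ((g * X ^ p) %ₘ nodal univ a).coeff 1 = 0 := by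
    intro p hpk hp1
    have hmem : (fun i => 1 * (X ^ p : F[X]).eval (a i)) ∈ GRSsub n k (k - 1) a fun _ => 1 :=
      ⟨X ^ p, by rw [natDegree_X_pow]; exact hpk,
        by rw [show k - (k - 1) = 1 by omega, coeff_X_pow, if_neg (Ne.symm hp1)], fun _ => rfl⟩
    have := hx _ hmem
    simp_rw [hxg, one_mul, mul_assoc, ← eval_mul] at this
    rwa [sum_mul_eval_eq_neg_coeff_one_modByMonic ha hw, neg_eq_zero] at this
  refine ⟨g, ?_, ?_, hxg⟩
  · have := natDegree_le_of_coeff_one_mul_X_pow_modByMonic_eq_zero nodal_monic hP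
      (coeff_zero_nodal_ne_zero ha.injOn hP) hgP fun p _ hpk => horth p hpk (by omega)
    rwa [natDegree_nodal, card_fin] at this
  · have := horth 0 (Nat.zero_le k) zero_ne_one
    rwa [pow_zero, mul_one, (modByMonic_eq_self_iff nodal_monic).mpr hgP,
      ← show n - k - (n - k - 1) = 1 by omega] at this

end GRS

theorem dual_GRSsub_last_general {F : Type*} [Field F] {n k : ℕ}
    (hk1 : 3 ≤ k) (hk2 : k ≤ n - 2)
    (a : Fin n → F) (ha : Function.Injective a)
    (u : Fin n → F) (hu : ∀ i, u i = ∏ j ∈ univ.erase i, (a j - a i)⁻¹)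
    (ht : ∑ A ∈ (univ : Finset (Fin n)).powersetCard (n - 1), ∏ j ∈ A, a j = 0)
    (w : Fin n → F)
    (hw : ∀ i, w i = u i * ∑ t ∈ (univ.erase i).powersetCard (n - 2), ∏ j ∈ t, a j) :
    dualCode (GRSsub n k (k - 1) a (fun _ => 1)) = GRSsub n (n - k) (n - k - 1) a w := by
  have hP : (Lagrange.nodal univ a).coeff 1 = 0 := by
    rw [Lagrange.coeff_nodal _ _ (by rw [card_fin]; omega), card_fin, ht, mul_zero]
  have hw' : ∀ i, w i = -(Lagrange.basis univ a i).coeff 1 := fun i => by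
    rw [Lagrange.coeff_one_basis (mem_univ i) (by rw [card_fin]; omega), card_fin, neg_neg, hw, hu]
  exact (dualCode_subset_GRSsub ha hw' hP (by omega) (by omega)).antisymm
    (GRSsub_subset_dualCode ha hw' hP (by omega) (by omega))

theorem dual_GRSsub_last {F : Type*} [Field F] [Fintype F] {n k : ℕ}
    (hk1 : 3 ≤ k) (hk2 : k ≤ n - 2)
    (a : Fin n → F) (ha : Function.Injective a)
    (u : Fin n → F) (hu : ∀ i, u i = ∏ j ∈ univ.erase i, (a j - a i)⁻¹)
    (ht : ∑ A ∈ (univ : Finset (Fin n)).powersetCard (n - 1), ∏ j ∈ A, a j = 0)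
    (w : Fin n → F)
    (hw : ∀ i, w i = u i * ∑ t ∈ (univ.erase i).powersetCard (n - 2), ∏ j ∈ t, a j) :
    dualCode (GRSsub n k (k - 1) a (fun _ => 1)) = GRSsub n (n - k) (n - k - 1) a w :=
  dual_GRSsub_last_general hk1 hk2 a ha u hu ht w hw
end

section
/- Let 3 ≤ k ≤ n-2, a_1,...,a_n ∈ F_q pairwise distinct, u_i = ∏_{j≠i}(a_j - a_i)^{-1}, h_1 = ∑_i u_i a_i^n and h_2 = ∑_i u_i a_i^{n+1}. If h_1 = 0 and h_2 = 0, then the dual code of GRS_{k,2}(a) equals the evaluation code {(u_1 g(a_1),...,u_n g(a_n)) : g ∈ span{1, x, ..., x^{n-k-2}, x^{n-k+1}}}. -/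
/-!
With these weights, `L(P) = ∑ i, u i * P(a i)` equals `(-1) ^ (n - 1)` times the coefficient of
`X ^ (n - 1)` in `P` whenever `deg P < n` (Lagrange interpolation), and `h1`, `h2` say precisely
that this persists up to `deg P ≤ n + 1`. The pairing of `(u i * g(a i))` with `(f(a i))` is
`L(g f)`, so for `g` in the stated span and `f` in `GRS_{k,2}` it vanishes by a coefficient count.
Conversely every word is `(u i * g(a i))` with `deg g < n`; testing it against `(a i ^ d)` for
`d ≤ k`, `d ≠ k - 2`, in increasing order of `d`, kills the coefficients of `g` from the top down,
each time keeping `deg (g X ^ d) ≤ n + 1`.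
-/

open Finset Polynomial

section Lagrange

variable {F : Type*} [Field F] {ι : Type*} [DecidableEq ι] {s : Finset ι} {v : ι → F}

theorem prod_sub_inv_ne_zero (hvs : Set.InjOn v s) {i : ι} (hi : i ∈ s) :
    ∏ j ∈ s.erase i, (v j - v i)⁻¹ ≠ 0 :=
  prod_ne_zero_iff.mpr fun _ hj => inv_ne_zero <| sub_ne_zero.mpr fun h =>
    (mem_erase.mp hj).1 (hvs (mem_erase.mp hj).2 hi h)

theorem sum_prod_sub_inv_mul_eval_eq_coeff (hvs : Set.InjOn v s) {P : F[X]}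
    (hP : P.degree < #s) :
    ∑ i ∈ s, (∏ j ∈ s.erase i, (v j - v i)⁻¹) * P.eval (v i) =
      (-1) ^ (#s - 1) * P.coeff (#s - 1) := by
  rw [Lagrange.coeff_eq_sum hvs hP, mul_sum]
  refine sum_congr rfl fun i hi => ?_
  have hflip :
      ∏ j ∈ s.erase i, (v j - v i) = (-1) ^ (#s - 1) * ∏ j ∈ s.erase i, (v i - v j) := by
    rw [← card_erase_of_mem hi, ← prod_neg]
    simp only [neg_sub]
  rw [prod_inv_distrib, hflip, mul_inv, ← inv_pow, inv_neg_one, div_eq_mul_inv]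
  ring

theorem exists_natDegree_le_eq_mul_eval (hvs : Set.InjOn v s) {u : ι → F}
    (hu : ∀ i ∈ s, u i ≠ 0) (w : ι → F) :
    ∃ g : F[X], g.natDegree ≤ #s - 1 ∧ ∀ i ∈ s, w i = u i * g.eval (v i) := by
  refine ⟨Lagrange.interpolate s v fun i => (u i)⁻¹ * w i,
    natDegree_le_of_degree_le (Lagrange.degree_interpolate_le _ hvs), fun i hi => ?_⟩
  rw [Lagrange.eval_interpolate_at_node _ hvs hi, mul_inv_cancel_left₀ (hu i hi)]

end Lagrange

theorem sum_mul_eval_eq_sum_range_coeff_mul {R ι : Type*} [CommSemiring R] (s : Finset ι)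
    (u a : ι → R) {P : R[X]} {N : ℕ} (hP : P.natDegree < N) :
    ∑ i ∈ s, u i * P.eval (a i) = ∑ m ∈ range N, P.coeff m * ∑ i ∈ s, u i * a i ^ m := by
  simp_rw [eval_eq_sum_range' hP, mul_sum]
  rw [sum_comm]
  exact sum_congr rfl fun m _ => sum_congr rfl fun i _ => mul_left_comm _ _ _

theorem coeff_mul_eq_zero_of_coeff_eq_zero {R : Type*} [Semiring R] {p q : R[X]} {i j : ℕ}
    (hp : p.natDegree ≤ i + 2) (hpi : p.coeff i = 0) (hpi' : p.coeff (i + 1) = 0)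
    (hq : q.natDegree ≤ j + 2) (hqj : q.coeff j = 0) : (p * q).coeff (i + j + 2) = 0 := by
  rw [coeff_mul]
  refine sum_eq_zero fun x hx => ?_
  have hsum : x.1 + x.2 = i + j + 2 := mem_antidiagonal.mp hx
  by_cases hx1 : i + 2 < x.1
  · rw [coeff_eq_zero_of_natDegree_lt (hp.trans_lt hx1), zero_mul]
  by_cases hx2 : j + 2 < x.2
  · rw [coeff_eq_zero_of_natDegree_lt (hq.trans_lt hx2), mul_zero]
  obtain h | h | h : x.1 = i ∨ x.1 = i + 1 ∨ x.2 = j := by omega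
  · rw [h, hpi, zero_mul]
  · rw [h, hpi', zero_mul]
  · rw [h, hqj, mul_zero]

section Moments

variable {F : Type*} [Field F] {n : ℕ} {a u : Fin n → F}

theorem sum_mul_pow_eq_ite (hn : 0 < n) (ha : Function.Injective a)
    (hu : ∀ i, u i = ∏ j ∈ univ.erase i, (a j - a i)⁻¹)
    (h1 : ∑ i, u i * a i ^ n = 0) (h2 : ∑ i, u i * a i ^ (n + 1) = 0) {m : ℕ} (hm : m ≤ n + 1) :
    ∑ i, u i * a i ^ m = if m = n - 1 then (-1) ^ (n - 1) else 0 := by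
  obtain hm | rfl | rfl : m < n ∨ m = n ∨ m = n + 1 := by omega
  · have := sum_prod_sub_inv_mul_eval_eq_coeff (s := univ) ha.injOn (P := X ^ m)
      (by rw [card_univ, Fintype.card_fin, degree_X_pow]; exact_mod_cast hm)
    simp only [card_univ, Fintype.card_fin, eval_pow, eval_X, coeff_X_pow, ← hu] at this
    rw [this, mul_ite, mul_one, mul_zero]
    exact if_congr eq_comm rfl rfl
  · rw [h1, if_neg (by omega)]
  · rw [h2, if_neg (by omega)]

theorem sum_mul_eval_eq_neg_one_pow_mul_coeff (hn : 0 < n) (ha : Function.Injective a)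
    (hu : ∀ i, u i = ∏ j ∈ univ.erase i, (a j - a i)⁻¹)
    (h1 : ∑ i, u i * a i ^ n = 0) (h2 : ∑ i, u i * a i ^ (n + 1) = 0) {P : F[X]}
    (hP : P.natDegree ≤ n + 1) :
    ∑ i, u i * P.eval (a i) = (-1) ^ (n - 1) * P.coeff (n - 1) := by
  rw [sum_mul_eval_eq_sum_range_coeff_mul _ _ _ (Nat.lt_succ_of_le hP)]
  rw [sum_congr rfl fun m hm => by
    rw [sum_mul_pow_eq_ite hn ha hu h1 h2 (Nat.lt_succ_iff.mp (mem_range.mp hm)), mul_ite,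
      mul_zero]]
  rw [sum_ite_eq', if_pos (mem_range.mpr (by omega)), mul_comm]

end Moments

section Codes

variable {F : Type*} [Field F] {n k : ℕ} {a u : Fin n → F}

theorem mem_dualCode_GRSsub_two (hk₁ : 2 ≤ k) (hk₂ : k < n)
    (hL : ∀ P : F[X], P.natDegree ≤ n + 1 →
      ∑ i, u i * P.eval (a i) = (-1) ^ (n - 1) * P.coeff (n - 1))
    {g : F[X]} (hg : g.natDegree ≤ n - k + 1) (hg₁ : g.coeff (n - k - 1) = 0)
    (hg₂ : g.coeff (n - k) = 0) {w : Fin n → F} (hw : ∀ i, w i = u i * g.eval (a i)) :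
    w ∈ dualCode (GRSsub n k 2 a fun _ => 1) := by
  rintro c ⟨f, hf, hf₀, hc⟩
  have hcoeff : (g * f).coeff (n - 1) = 0 := by
    have := coeff_mul_eq_zero_of_coeff_eq_zero (i := n - k - 1) (j := k - 2) (by omega) hg₁
      (by rwa [show n - k - 1 + 1 = n - k by omega]) (by omega) hf₀
    rwa [show n - k - 1 + (k - 2) + 2 = n - 1 by omega] at this
  calc ∑ i, w i * c i = ∑ i, u i * (g * f).eval (a i) := by
        simp only [hw, hc, eval_mul, one_mul, mul_assoc]
    _ = 0 := by
        rw [hL _ (natDegree_mul_le_of_le hg hf |>.trans (by omega)), hcoeff, mul_zero]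

theorem coeff_eq_zero_of_sum_mul_eval_mul_X_pow_eq_zero
    (hL : ∀ P : F[X], P.natDegree ≤ n + 1 →
      ∑ i, u i * P.eval (a i) = (-1) ^ (n - 1) * P.coeff (n - 1))
    {g : F[X]} {d : ℕ} (hd : d ≤ n - 1) (hgd : g.natDegree + d ≤ n + 1)
    (h : ∑ i, u i * (g * X ^ d).eval (a i) = 0) : g.coeff (n - 1 - d) = 0 := by
  rw [hL _ (natDegree_mul_le_of_le le_rfl (natDegree_X_pow_le d) |>.trans hgd), coeff_mul_X_pow',
    if_pos hd] at h
  exact (mul_eq_zero.mp h).resolve_left (pow_ne_zero _ (neg_ne_zero.mpr one_ne_zero))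

theorem natDegree_le_and_coeff_eq_zero_of_mem_dualCode_GRSsub_two (hk₁ : 2 ≤ k)
    (hk₂ : k < n)
    (hL : ∀ P : F[X], P.natDegree ≤ n + 1 →
      ∑ i, u i * P.eval (a i) = (-1) ^ (n - 1) * P.coeff (n - 1))
    {g : F[X]} (hg : g.natDegree ≤ n - 1) {w : Fin n → F} (hw : ∀ i, w i = u i * g.eval (a i))
    (hdual : w ∈ dualCode (GRSsub n k 2 a fun _ => 1)) :
    g.natDegree ≤ n - k + 1 ∧ g.coeff (n - k - 1) = 0 ∧ g.coeff (n - k) = 0 := by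
  have htest : ∀ d ≤ k, d ≠ k - 2 → ∑ i, u i * (g * X ^ d).eval (a i) = 0 := fun d hd hdk => by
    have := hdual _ ⟨X ^ d, by simpa using hd, by rw [coeff_X_pow, if_neg (Ne.symm hdk)],
      fun i => rfl⟩
    simpa only [hw, eval_mul, eval_pow, eval_X, one_mul, mul_assoc] using this
  have hdeg : ∀ j ≤ k - 2, g.natDegree ≤ n - 1 - j := by
    intro j hj
    induction j with
    | zero => simpa using hg
    | succ j ih =>
      have hgj := coeff_eq_zero_of_sum_mul_eval_mul_X_pow_eq_zero hL (d := j) (by omega)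
        (by have := ih (by omega); omega) (htest j (by omega) (by omega))
      simpa [Nat.sub_sub, Nat.add_assoc] using natDegree_le_pred (ih (by omega)) hgj
  have hg' : g.natDegree ≤ n - k + 1 := (hdeg (k - 2) le_rfl).trans (by omega)
  refine ⟨hg', ?_, ?_⟩
  · have := coeff_eq_zero_of_sum_mul_eval_mul_X_pow_eq_zero hL (d := k) (by omega) (by omega)
      (htest k le_rfl (by omega))
    rwa [show n - 1 - k = n - k - 1 by omega] at this
  · have := coeff_eq_zero_of_sum_mul_eval_mul_X_pow_eq_zero hL (d := k - 1) (by omega) (by omega)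
      (htest (k - 1) (by omega) (by omega))
    rwa [show n - 1 - (k - 1) = n - k by omega] at this

end Codes

theorem dual_GRSsub_two_case1_general {F : Type*} [Field F] {n k : ℕ}
    (hk1 : 3 ≤ k) (hk2 : k ≤ n - 2)
    (a : Fin n → F) (ha : Function.Injective a)
    (u : Fin n → F) (hu : ∀ i, u i = ∏ j ∈ univ.erase i, (a j - a i)⁻¹)
    (h1 : ∑ i, u i * a i ^ n = 0) (h2 : ∑ i, u i * a i ^ (n + 1) = 0) :
    dualCode (GRSsub n k 2 a (fun _ => 1)) =
      {c | ∃ g : F[X], g.natDegree ≤ n - k + 1 ∧ g.coeff (n - k - 1) = 0 ∧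
        g.coeff (n - k) = 0 ∧ ∀ i, c i = u i * g.eval (a i)} := by
  have hn : 0 < n := by omega
  have hL := fun P => sum_mul_eval_eq_neg_one_pow_mul_coeff hn ha hu h1 h2 (P := P)
  ext w
  constructor
  · intro hw
    obtain ⟨g, hg, hgw⟩ := exists_natDegree_le_eq_mul_eval (s := univ) ha.injOn
      (fun i _ => hu i ▸ prod_sub_inv_ne_zero ha.injOn (mem_univ i)) w
    rw [card_univ, Fintype.card_fin] at hg
    have hgw' : ∀ i, w i = u i * g.eval (a i) := fun i => hgw i (mem_univ i)
    obtain ⟨hdeg, hcoeff₁, hcoeff₂⟩ :=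
      natDegree_le_and_coeff_eq_zero_of_mem_dualCode_GRSsub_two (by omega) (by omega) hL hg hgw' hw
    exact ⟨g, hdeg, hcoeff₁, hcoeff₂, hgw'⟩
  · rintro ⟨g, hg, hg₁, hg₂, hgw⟩
    exact mem_dualCode_GRSsub_two (by omega) (by omega) hL hg hg₁ hg₂ hgw

theorem dual_GRSsub_two_case1 {F : Type*} [Field F] [Fintype F] {n k : ℕ}
    (hk1 : 3 ≤ k) (hk2 : k ≤ n - 2)
    (a : Fin n → F) (ha : Function.Injective a)
    (u : Fin n → F) (hu : ∀ i, u i = ∏ j ∈ univ.erase i, (a j - a i)⁻¹)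
    (h1 : ∑ i, u i * a i ^ n = 0) (h2 : ∑ i, u i * a i ^ (n + 1) = 0) :
    dualCode (GRSsub n k 2 a (fun _ => 1)) =
      {c | ∃ g : F[X], g.natDegree ≤ n - k + 1 ∧ g.coeff (n - k - 1) = 0 ∧
        g.coeff (n - k) = 0 ∧ ∀ i, c i = u i * g.eval (a i)} :=
  dual_GRSsub_two_case1_general hk1 hk2 a ha u hu h1 h2
end
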